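/- arXiv:2105.09194 — 6 statements merged into one kernel-verified Lean document; each statement's English description precedes it below -/
import Mathlib

section
/- Let r ≥ 3 and α > 0, and let G be an n-vertex graph with minimum degree at least ((2r−5)/(2r−3)+α)·n. Then there exists a constant c_r > 0 depending only on r such that every copy of K_r in G contains an edge that lies in at least c_r·α·n^{r−2} copies of K_r. -/
open Finset SimpleGraph
open scoped Classical

/-!
Induction on `r`. For a triangle `abc`, inclusion–exclusion on the three neighbourhoods gives
`3δ ≤ n + codeg(a,b) + codeg(b,c) + codeg(a,c)`, so some pair has at least `αn` common
neighbours, each completing it to a triangle.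

For the step, let `t` be an `(r+1)`-clique. Counting the edges between `t` and `V` shows that
at least `n/5` vertices `x` see `r` vertices of `t`. Every vertex of the neighbourhood `N(x)`
has at least `d(x) + δ - n` neighbours inside it, which puts `G[N(x)]` above the threshold for
`r` with the same `α`; the induction hypothesis yields an edge of `t ∩ N(x)` lying in many
`r`-cliques of `G[N(x)]`, and adding `x` makes them `(r+1)`-cliques of `G`. Pigeonholing the
vertices `x` according to the edge they produce, and double counting, one edge of `t` gets
`≳ c α n^(r-1)` cliques.
-/

/-- With `P = 2r - 3`, `P / (P + 2)` and `(P - 2) / P` are the degree thresholds for `r + 1` and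
`r`. An `N`-vertex graph of minimum degree `D` above the former has, inside a neighbourhood of size
`M`, minimum degree at least `M + D - N`, which is above the latter. -/
lemma threshold_step {P α N D M : ℝ} (hP : 0 < P) (hα : 0 ≤ α) (hN : 0 ≤ N)
    (hD : (P / (P + 2) + α) * N ≤ D) (hDM : D ≤ M) (hMN : M ≤ N) :
    ((P - 2) / P + α) * M ≤ M + D - N := by
  have hD' : (P + α * (P + 2)) * N ≤ D * (P + 2) := by
    calc (P + α * (P + 2)) * N = (P / (P + 2) + α) * N * (P + 2) := by field_simp
      _ ≤ D * (P + 2) := by gcongr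
  rw [div_add' _ _ _ hP.ne', div_mul_eq_mul_div, div_le_iff₀ hP]
  rcases le_or_gt (α * P) 2 with h | h
  · nlinarith [mul_nonneg (sub_nonneg.2 h) (sub_nonneg.2 hDM), mul_nonneg hα hN,
      mul_nonneg (by linarith : (0:ℝ) ≤ P + 2 - α * P) (sub_nonneg.2 hD'),
      mul_nonneg (mul_nonneg hα hN) (by nlinarith : (0:ℝ) ≤ 4 * P + 4 - α * P * (P + 2))]
  · nlinarith [mul_nonneg (sub_nonneg.2 h.le) (sub_nonneg.2 hMN),
      mul_nonneg hP.le (sub_nonneg.2 hD')]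

namespace SimpleGraph

lemma IsNClique.insert_map_induce_neighborSet {V : Type*} [DecidableEq V] {G : SimpleGraph V}
    {x : V} {r : ℕ} {s : Finset (G.neighborSet x)}
    (hs : (G.induce (G.neighborSet x)).IsNClique r s) :
    G.IsNClique (r + 1) (insert x (s.map (.subtype _))) :=
  ((isNClique_induce_iff _ _ _).mp hs).insert fun y hy ↦ by
    obtain ⟨z, -, rfl⟩ := mem_map.mp hy
    exact z.2

variable {V : Type*} [Fintype V] [DecidableEq V] (G : SimpleGraph V) [DecidableRel G.Adj]

lemma card_add_minDegree_le_card_add_minDegree_induce (s : Set V) [Fintype s] :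
    Fintype.card s + G.minDegree ≤ Fintype.card V + (G.induce s).minDegree := by
  rcases isEmpty_or_nonempty s with _ | _
  · rcases isEmpty_or_nonempty V with _ | _
    · simp
    · simp [G.minDegree_lt_card.le]
  obtain ⟨y, hy⟩ := (G.induce s).exists_minimal_degree_vertex
  have hdeg : (G.induce s).degree y = #(G.neighborFinset y ∩ s.toFinset) := by
    rw [← card_neighborFinset_eq_degree, ← card_map (.subtype (· ∈ s))]
    convert congrArg card (G.map_neighborFinset_induce y)
  have hunion : #(G.neighborFinset y ∪ s.toFinset) ≤ Fintype.card V := card_le_univ _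
  have hinter := card_union_add_card_inter (G.neighborFinset y) s.toFinset
  rw [card_neighborFinset_eq_degree, Set.toFinset_card] at hinter
  have := G.minDegree_le_degree y
  omega

lemma card_cliques_induce_neighborSet_le (x : V) (r : ℕ) (u v : G.neighborSet x) :
    #{s ∈ (G.induce (G.neighborSet x)).cliqueFinset r | u ∈ s ∧ v ∈ s} ≤
      #{S ∈ G.cliqueFinset (r + 1) | ↑u ∈ S ∧ ↑v ∈ S ∧ x ∈ S} := by
  have hx (s : Finset (G.neighborSet x)) : x ∉ s.map (.subtype _) := by
    simp only [mem_map, Function.Embedding.coe_subtype, not_exists, not_and]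
    exact fun z _ hz ↦ G.irrefl (hz ▸ z.2)
  refine card_le_card_of_injOn (fun s ↦ insert x (s.map (.subtype _))) (fun s hs ↦ ?_)
    (fun s₁ _ s₂ _ h ↦ ?_)
  · simp only [coe_filter, mem_cliqueFinset_iff, Set.mem_ofPred_eq] at hs ⊢
    exact ⟨hs.1.insert_map_induce_neighborSet, mem_insert_of_mem (mem_map_of_mem _ hs.2.1),
      mem_insert_of_mem (mem_map_of_mem _ hs.2.2), mem_insert_self _ _⟩
  · have := congrArg (erase · x) h
    simp only [erase_insert (hx s₁), erase_insert (hx s₂)] at this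
    exact Finset.map_injective _ this

lemma card_inter_neighborFinset_le_card_cliques {u v : V} (huv : G.Adj u v) :
    #(G.neighborFinset u ∩ G.neighborFinset v) ≤ #{s ∈ G.cliqueFinset 3 | u ∈ s ∧ v ∈ s} := by
  refine card_le_card_of_injOn (fun w ↦ {u, v, w}) (fun w hw ↦ ?_) (fun w₁ hw₁ w₂ _ h ↦ ?_)
  · simp only [coe_inter, Set.mem_inter_iff, mem_coe, mem_neighborFinset] at hw
    simp [is3Clique_triple_iff, huv, hw.1, hw.2]
  · simp only [coe_inter, Set.mem_inter_iff, mem_coe, mem_neighborFinset] at hw₁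
    have : w₁ ∈ ({u, v, w₂} : Finset V) := by simp only at h; rw [← h]; simp
    simp only [mem_insert, mem_singleton] at this
    rcases this with rfl | rfl | rfl
    · exact (G.irrefl hw₁.1).elim
    · exact (G.irrefl hw₁.2).elim
    · rfl

lemma degree_add_degree_add_degree_le (a b c : V) :
    G.degree a + G.degree b + G.degree c ≤ Fintype.card V +
      #(G.neighborFinset a ∩ G.neighborFinset b) + #(G.neighborFinset b ∩ G.neighborFinset c) +
      #(G.neighborFinset a ∩ G.neighborFinset c) := by
  have ind (s : Finset V) : #s = ∑ x, if x ∈ s then 1 else 0 := by simp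
  simp only [← card_neighborFinset_eq_degree, ind, ← card_univ, ← sum_add_distrib]
  refine sum_le_sum fun x _ ↦ ?_
  simp only [mem_inter, mem_neighborFinset]
  by_cases G.Adj a x <;> by_cases G.Adj b x <;> by_cases G.Adj c x <;> simp [*]

lemma sum_card_inter_neighborFinset (t : Finset V) :
    ∑ x, #(t ∩ G.neighborFinset x) = ∑ y ∈ t, G.degree y := by
  convert sum_card_bipartiteAbove_eq_sum_card_bipartiteBelow G.Adj (s := univ) (t := t) using 1
  · refine sum_congr rfl fun x _ ↦ congrArg card ?_
    ext; simp [bipartiteAbove]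
  · refine sum_congr rfl fun y _ ↦ ?_
    rw [← card_neighborFinset_eq_degree]; congr 1; ext; simp [bipartiteBelow, adj_comm]

lemma sum_degree_le {t : Finset V} {r : ℕ} (ht : #t = r + 1) :
    ∑ y ∈ t, G.degree y ≤
      (r - 1) * Fintype.card V + 2 * #{x | r ≤ #(t ∩ G.neighborFinset x)} := by
  rw [← sum_card_inter_neighborFinset]
  calc ∑ x, #(t ∩ G.neighborFinset x)
      ≤ ∑ x, ((r - 1) + if r ≤ #(t ∩ G.neighborFinset x) then 2 else 0) := by
        refine sum_le_sum fun x _ ↦ ?_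
        have := card_le_card (inter_subset_left (s₁ := t) (s₂ := G.neighborFinset x))
        split_ifs <;> omega
    _ = _ := by
        rw [sum_add_distrib, sum_const, card_univ, smul_eq_mul, ← sum_filter, sum_const,
          smul_eq_mul]
        ring

lemma exists_adj_mul_card_le_card_cliques {k : ℕ} {t W : Finset V} {B : ℝ} (hB : 0 ≤ B)
    (hW : W.Nonempty) (h : ∀ x ∈ W, ∃ p ∈ t ×ˢ t, G.Adj p.1 p.2 ∧
      B ≤ #{S ∈ G.cliqueFinset k | p.1 ∈ S ∧ p.2 ∈ S ∧ x ∈ S}) :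
    ∃ u ∈ t, ∃ v ∈ t, G.Adj u v ∧
      B * #W ≤ #t ^ 2 * k * #{S ∈ G.cliqueFinset k | u ∈ S ∧ v ∈ S} := by
  choose! e he hadj hcount using h
  obtain ⟨x₀, hx₀⟩ := hW
  have hW₀ : (0 : ℝ) < #W := by exact_mod_cast card_pos.2 ⟨x₀, hx₀⟩
  have ht : (0 : ℝ) < #t := by exact_mod_cast card_pos.2 ⟨_, (mem_product.1 (he x₀ hx₀)).1⟩
  obtain ⟨p, hp, hfiber⟩ := exists_le_card_fiber_of_nsmul_le_card_of_maps_to he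
    ⟨_, he x₀ hx₀⟩ (b := (#W : ℝ) / #t ^ 2) (by
      rw [card_product, nsmul_eq_mul, Nat.cast_mul, ← sq, mul_div_cancel₀ _ (by positivity)])
  set W' := {x ∈ W | e x = p}
  obtain ⟨x, hx⟩ : W'.Nonempty :=
    card_pos.1 <| by exact_mod_cast (div_pos hW₀ (by positivity)).trans_le hfiber
  obtain ⟨hxW, rfl⟩ := mem_filter.1 hx
  set P := {S ∈ G.cliqueFinset k | (e x).1 ∈ S ∧ (e x).2 ∈ S}
  refine ⟨_, (mem_product.1 hp).1, _, (mem_product.1 hp).2, hadj x hxW, ?_⟩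
  have hdouble : #W' • B ≤ #P • (k : ℝ) := by
    refine card_nsmul_le_card_nsmul (fun y S ↦ y ∈ S) (fun y hy ↦ ?_) (fun S hS ↦ ?_)
    · obtain ⟨hyW, hy⟩ := mem_filter.1 hy
      refine (hcount y hyW).trans (Nat.cast_le.2 (card_le_card fun S hS ↦ ?_))
      simp only [mem_filter, bipartiteAbove, P, ← hy] at hS ⊢
      exact ⟨⟨hS.1, hS.2.1, hS.2.2.1⟩, hS.2.2.2⟩
    · have hS := (mem_cliqueFinset_iff.1 (mem_filter.1 hS).1).2
      exact_mod_cast hS ▸ card_le_card fun y hy ↦ (mem_filter.1 hy).2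
  rw [nsmul_eq_mul, nsmul_eq_mul] at hdouble
  calc B * #W = #t ^ 2 * (B * (#W / #t ^ 2)) := by field_simp
    _ ≤ #t ^ 2 * (B * #W') := by gcongr
    _ ≤ #t ^ 2 * k * #P := by nlinarith

lemma div_five_le_card_filter {r : ℕ} (hr : 3 ≤ r)
    (hδ : (2 * (r : ℝ) - 3) * Fintype.card V ≤ (2 * r - 1) * G.minDegree)
    {t : Finset V} (ht : #t = r + 1) :
    (Fintype.card V : ℝ) / 5 ≤ #{x | r ≤ #(t ∩ G.neighborFinset x)} := by
  have hr' : (3 : ℝ) ≤ r := by exact_mod_cast hr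
  have hsum : (r + 1) * G.minDegree ≤ ∑ y ∈ t, G.degree y := by
    simpa [ht] using card_nsmul_le_sum t (fun y ↦ G.degree y) G.minDegree
      fun y _ ↦ G.minDegree_le_degree y
  have hcount : ((r + 1 : ℕ) : ℝ) * G.minDegree ≤
      ((r - 1 : ℕ) : ℝ) * Fintype.card V + 2 * #{x | r ≤ #(t ∩ G.neighborFinset x)} := by
    exact_mod_cast hsum.trans (G.sum_degree_le ht)
  push_cast [Nat.cast_sub (by omega : 1 ≤ r)] at hcount
  nlinarith

end SimpleGraph

def PopularEdgeBound (r : ℕ) (c : ℝ) : Prop :=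
  ∀ α : ℝ, 0 < α → ∀ (V : Type) [Fintype V] [DecidableEq V] (G : SimpleGraph V)
    [DecidableRel G.Adj], ((2 * (r : ℝ) - 5) / (2 * r - 3) + α) * Fintype.card V ≤ G.minDegree →
    ∀ t ∈ G.cliqueFinset r, ∃ u v, u ∈ t ∧ v ∈ t ∧ G.Adj u v ∧
      c * α * (Fintype.card V : ℝ) ^ (r - 2) ≤ #{s ∈ G.cliqueFinset r | u ∈ s ∧ v ∈ s}

lemma popularEdgeBound_three : PopularEdgeBound 3 1 := by
  intro α hα V _ _ G _ hδ t ht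
  obtain ⟨a, b, c, hab, hac, hbc, rfl⟩ := is3Clique_iff.1 (mem_cliqueFinset_iff.1 ht)
  have hpopular {u v : V} (huv : G.Adj u v)
      (h : α * Fintype.card V ≤ #(G.neighborFinset u ∩ G.neighborFinset v)) :
      1 * α * (Fintype.card V : ℝ) ^ (3 - 2) ≤ #{s ∈ G.cliqueFinset 3 | u ∈ s ∧ v ∈ s} := by
    simpa using h.trans (by exact_mod_cast G.card_inter_neighborFinset_le_card_cliques huv)
  have hsum := G.degree_add_degree_add_degree_le a b c
  have hδa := G.minDegree_le_degree a
  have hδb := G.minDegree_le_degree b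
  have hδc := G.minDegree_le_degree c
  rify at hsum hδa hδb hδc
  norm_num at hδ
  by_cases hab' : α * Fintype.card V ≤ #(G.neighborFinset a ∩ G.neighborFinset b)
  · exact ⟨a, b, by simp, by simp, hab, hpopular hab hab'⟩
  by_cases hbc' : α * Fintype.card V ≤ #(G.neighborFinset b ∩ G.neighborFinset c)
  · exact ⟨b, c, by simp, by simp, hbc, hpopular hbc hbc'⟩
  exact ⟨a, c, by simp, by simp, hac, hpopular hac (by linarith)⟩

lemma PopularEdgeBound.exists_adj_le_card_cliques_of_forall_adj {r : ℕ} {c α : ℝ}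
    (h : PopularEdgeBound r c) (hr : 2 ≤ r) (hc : 0 ≤ c) (hα : 0 < α) {V : Type} [Fintype V]
    [DecidableEq V] {G : SimpleGraph V} [DecidableRel G.Adj]
    (hδ : ((2 * (r : ℝ) - 3) / (2 * r - 1) + α) * Fintype.card V ≤ G.minDegree)
    {x : V} {s : Finset V} (hs : G.IsNClique r s) (hsx : ∀ y ∈ s, G.Adj x y) :
    ∃ u ∈ s, ∃ v ∈ s, G.Adj u v ∧ c * α * (G.minDegree : ℝ) ^ (r - 2) ≤
      #{S ∈ G.cliqueFinset (r + 1) | u ∈ S ∧ v ∈ S ∧ x ∈ S} := by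
  have hr' : (2 : ℝ) ≤ r := by exact_mod_cast hr
  set N := G.neighborSet x
  have hdeg : Fintype.card N = G.degree x := G.card_neighborSet_eq_degree x
  have hmin : ((2 * (r : ℝ) - 5) / (2 * r - 3) + α) * Fintype.card N ≤
      (G.induce N).minDegree := by
    have hind := G.card_add_minDegree_le_card_add_minDegree_induce N
    have hδx := G.minDegree_le_degree x
    have hxV := (G.degree_lt_card_verts x).le
    rw [hdeg] at hind ⊢
    rify at hind hδx hxV
    have := threshold_step (P := 2 * r - 3) (by linarith) hα.le (Nat.cast_nonneg _)
      (by rwa [show (2 * r - 3 + 2 : ℝ) = 2 * r - 1 by ring]) hδx hxV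
    rw [show (2 * r - 3 - 2 : ℝ) = 2 * r - 5 by ring] at this
    linarith
  have hs' : (G.induce N).IsNClique r (s.subtype (· ∈ N)) := by
    rwa [isNClique_induce_iff, subtype_map_of_mem (p := (· ∈ N)) hsx]
  obtain ⟨u, v, hu, hv, huv, hcount⟩ :=
    h α hα N (G.induce N) hmin _ (mem_cliqueFinset_iff.2 hs')
  refine ⟨u, mem_subtype.1 hu, v, mem_subtype.1 hv, huv, ?_⟩
  calc c * α * (G.minDegree : ℝ) ^ (r - 2)
      ≤ c * α * (Fintype.card N : ℝ) ^ (r - 2) := by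
        rw [hdeg]; gcongr; exact G.minDegree_le_degree x
    _ ≤ _ := hcount
    _ ≤ _ := by exact_mod_cast G.card_cliques_induce_neighborSet_le x r u v

lemma PopularEdgeBound.succ {r : ℕ} {c : ℝ} (h : PopularEdgeBound r c) (hr : 3 ≤ r)
    (hc : 0 ≤ c) : PopularEdgeBound (r + 1) (c / (5 * 2 ^ (r - 2) * (r + 1) ^ 3)) := by
  intro α hα V _ _ G _ hδ t ht
  have hr' : (3 : ℝ) ≤ r := by exact_mod_cast hr
  have htcl := mem_cliqueFinset_iff.1 ht
  set n := Fintype.card V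
  set W : Finset V := {x | r ≤ #(t ∩ G.neighborFinset x)}
  have hδ' : ((2 * (r : ℝ) - 3) / (2 * r - 1) + α) * n ≤ G.minDegree := by
    convert hδ using 4 <;> push_cast <;> ring
  have hδ₀ : (2 * (r : ℝ) - 3) * n ≤ (2 * r - 1) * G.minDegree := by
    have : (2 * (r : ℝ) - 3) / (2 * r - 1) * n ≤ G.minDegree := by nlinarith
    rwa [div_mul_eq_mul_div, div_le_iff₀ (by linarith), mul_comm _ (2 * (r : ℝ) - 1)] at this
  have hn : (0 : ℝ) < n := by
    obtain ⟨v, -⟩ := card_pos.1 (by rw [htcl.2]; exact r.succ_pos)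
    exact_mod_cast Fintype.card_pos_iff.2 ⟨v⟩
  have hWn : (n : ℝ) / 5 ≤ #W := G.div_five_le_card_filter hr hδ₀ htcl.2
  have hpair : ∀ x ∈ W, ∃ p ∈ t ×ˢ t, G.Adj p.1 p.2 ∧ c * α * (G.minDegree : ℝ) ^ (r - 2) ≤
      #{S ∈ G.cliqueFinset (r + 1) | p.1 ∈ S ∧ p.2 ∈ S ∧ x ∈ S} := by
    intro x hx
    obtain ⟨s, hst, hs⟩ := exists_subset_card_eq (mem_filter.1 hx).2
    have hs_sub : s ⊆ t := hst.trans inter_subset_left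
    obtain ⟨u, hu, v, hv, huv, hcount⟩ := h.exists_adj_le_card_cliques_of_forall_adj (by omega)
      hc hα hδ' ⟨htcl.1.subset (by exact_mod_cast hs_sub), hs⟩
      fun y hy ↦ (mem_neighborFinset _ _ _).1 (mem_inter.1 (hst hy)).2
    exact ⟨(u, v), mem_product.2 ⟨hs_sub hu, hs_sub hv⟩, huv, hcount⟩
  obtain ⟨u, hu, v, hv, huv, hcount⟩ := G.exists_adj_mul_card_le_card_cliques (by positivity)
    (card_pos.1 (by exact_mod_cast (by positivity : (0 : ℝ) < n / 5).trans_le hWn)) hpair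
  refine ⟨u, v, hu, hv, huv, ?_⟩
  rw [htcl.2] at hcount
  push_cast at hcount
  rw [show r + 1 - 2 = r - 2 + 1 by omega, pow_succ]
  calc c / (5 * 2 ^ (r - 2) * (r + 1) ^ 3) * α * (n ^ (r - 2) * n)
      = c * α * (n / 2) ^ (r - 2) * (n / 5) / (r + 1) ^ 3 := by rw [div_pow]; field_simp
    _ ≤ c * α * G.minDegree ^ (r - 2) * #W / (r + 1) ^ 3 := by gcongr; nlinarith
    _ ≤ _ := by rw [div_le_iff₀ (by positivity)]; linarith

theorem exists_pos_popularEdgeBound {r : ℕ} (hr : 3 ≤ r) : ∃ c > 0, PopularEdgeBound r c := by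
  induction r, hr using Nat.le_induction with
  | base => exact ⟨1, one_pos, popularEdgeBound_three⟩
  | succ r hr ih =>
    obtain ⟨c, hc, h⟩ := ih
    exact ⟨_, by positivity, h.succ hr hc.le⟩

theorem popular_edge_lemma (r : ℕ) (hr : 3 ≤ r) :
    ∃ c : ℝ, 0 < c ∧
      ∀ (α : ℝ), 0 < α →
        ∀ (V : Type) [Fintype V] [DecidableEq V] (G : SimpleGraph V)
          [DecidableRel G.Adj] (n : ℕ),
          Fintype.card V = n →
          ((2 * (r : ℝ) - 5) / (2 * r - 3) + α) * n ≤ G.minDegree →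
          ∀ t ∈ G.cliqueFinset r, ∃ u v, u ∈ t ∧ v ∈ t ∧ G.Adj u v ∧
            c * α * (n : ℝ) ^ (r - 2) ≤
              (((G.cliqueFinset r).filter fun s => u ∈ s ∧ v ∈ s).card : ℝ) := by
  obtain ⟨c, hc, h⟩ := exists_pos_popularEdgeBound hr
  exact ⟨c, hc, fun α hα V _ _ G _ n hn ↦ hn ▸ h α hα V G⟩
end

section
/- For every r ≥ 3 there is a constant μ_r > 0 such that for all α, ε > 0 the following holds: if G is an n-vertex graph with minimum degree at least ((2r−5)/(2r−3)+α)·n and G contains at most μ_r·α·ε·n^r copies of K_r, then there is a set of at most ε·n² edges of G whose removal makes G K_r-free. -/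
open Finset SimpleGraph
open scoped Classical

/-!
Call an edge of a `K_k` heavy if it lies in at least `α n^(k-2) / C` copies of `K_k`. Above the
minimum degree `((2k-5)/(2k-3) + α) n`, every `K_k` contains a heavy edge. Deleting all heavy edges
therefore destroys every `K_r`, and double counting pairs (heavy edge, `K_r` through it) bounds
their number by `(r+1).choose 2 · #K_r · C / (α n^(r-2))`, which is at most `ε n²` for
`μ = 1 / (C · (r+1).choose 2)`.

Heavy edges are found by induction on `k`. Summing degrees over a `K_{k+1}` `s` shows that many
vertices `u` are adjacent to all but one vertex of `s`. The neighbourhood of `u` has minimum degree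
at least `δ + d(u) - n`, which is again above the threshold for `k`, so the `k` neighbours of `u`
in `s` span an edge lying in many `K_k` of the neighbourhood, i.e. in many `K_{k+1}` through `u`.
Pigeonholing over the pairs of `s` yields one edge of `s` that works for many `u`. For `k = 3`, a
vertex adjacent to two vertices of a triangle gives one triangle through the edge they span.
-/

namespace SimpleGraph

variable {V : Type*} [Fintype V] (G : SimpleGraph V) [DecidableRel G.Adj]

lemma card_mul_minDegree_le (s : Finset V) :
    (#s * G.minDegree : ℝ) ≤
      (#s - 2) * Fintype.card V + 2 * #{z | #s ≤ #{v ∈ s | G.Adj z v} + 1} := by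
  have hdeg : ∑ v ∈ s, G.degree v = ∑ z, #{v ∈ s | G.Adj z v} := by
    simp_rw [← card_neighborFinset_eq_degree, neighborFinset_eq_filter]
    convert sum_card_bipartiteAbove_eq_sum_card_bipartiteBelow G.Adj using 3 <;> ext <;>
      simp [bipartiteAbove, bipartiteBelow, adj_comm]
  have hterm (z : V) : (#{v ∈ s | G.Adj z v} : ℝ) ≤
      (#s - 2) + 2 * if #s ≤ #{v ∈ s | G.Adj z v} + 1 then 1 else 0 := by
    have hle : #{v ∈ s | G.Adj z v} ≤ #s := card_filter_le _ _
    split_ifs with hz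
    · linarith [(Nat.cast_le (α := ℝ)).2 hle]
    · have : (#{v ∈ s | G.Adj z v} : ℝ) + 2 ≤ #s := by exact_mod_cast (by omega)
      linarith
  calc (#s * G.minDegree : ℝ) ≤ ∑ v ∈ s, (G.degree v : ℝ) := by
        simpa using card_nsmul_le_sum s (fun v ↦ (G.degree v : ℝ)) _
          fun v _ ↦ by exact_mod_cast G.minDegree_le_degree v
    _ = ∑ z, (#{v ∈ s | G.Adj z v} : ℝ) := by exact_mod_cast hdeg
    _ ≤ ∑ z, ((#s - 2) + 2 * if #s ≤ #{v ∈ s | G.Adj z v} + 1 then 1 else 0 : ℝ) :=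
        sum_le_sum fun z _ ↦ hterm z
    _ = _ := by
        simp only [sum_add_distrib, ← mul_sum, sum_boole, sum_const, card_univ, nsmul_eq_mul]
        ring

lemma degree_add_degree_le_degree_induce_neighborSet (u : V) (w : G.neighborSet u) :
    G.degree u + G.degree w ≤ (G.induce (G.neighborSet u)).degree w + Fintype.card V := by
  have hmap : ((G.induce (G.neighborSet u)).neighborFinset w).map (.subtype _) =
      G.neighborFinset u ∩ G.neighborFinset w := by
    ext v
    simp [and_comm]
  calc G.degree u + G.degree w
      = #(G.neighborFinset u ∩ G.neighborFinset w) +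
          #(G.neighborFinset u ∪ G.neighborFinset w) := by
        rw [card_inter_add_card_union, card_neighborFinset_eq_degree, card_neighborFinset_eq_degree]
    _ ≤ (G.induce (G.neighborSet u)).degree w + Fintype.card V := by
        rw [← hmap, card_map, card_neighborFinset_eq_degree]
        exact Nat.add_le_add_left (card_le_univ _) _

lemma degree_add_minDegree_le_minDegree_induce_neighborSet (u : V) :
    G.degree u + G.minDegree ≤ (G.induce (G.neighborSet u)).minDegree + Fintype.card V := by
  cases isEmpty_or_nonempty (G.neighborSet u) with
  | inl h =>
    have : G.degree u = 0 := by rw [← card_neighborSet_eq_degree, Fintype.card_eq_zero]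
    have := G.minDegree_le_degree u
    have := G.degree_lt_card_verts u
    omega
  | inr h =>
    obtain ⟨w, hw⟩ := (G.induce (G.neighborSet u)).exists_minimal_degree_vertex
    rw [hw]
    exact (Nat.add_le_add_left (G.minDegree_le_degree w) _).trans
      (G.degree_add_degree_le_degree_induce_neighborSet u w)

variable [DecidableEq V]

def cliquesThrough (k : ℕ) (A : Finset V) : Finset (Finset V) :=
  {t ∈ G.cliqueFinset k | A ⊆ t}

lemma cliquesThrough_insert (k : ℕ) (u : V) (A : Finset V) :
    G.cliquesThrough k (insert u A) = {t ∈ G.cliquesThrough k A | u ∈ t} := by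
  ext t
  simp only [cliquesThrough, mem_filter, insert_subset_iff]
  tauto

lemma sum_card_cliquesThrough_insert_le (k : ℕ) (A F : Finset V) :
    ∑ u ∈ F, #(G.cliquesThrough k (insert u A)) ≤ k * #(G.cliquesThrough k A) := by
  calc ∑ u ∈ F, #(G.cliquesThrough k (insert u A))
      = ∑ t ∈ G.cliquesThrough k A, #{u ∈ F | u ∈ t} := by
        simp_rw [cliquesThrough_insert]
        exact sum_card_bipartiteAbove_eq_sum_card_bipartiteBelow (fun u t ↦ u ∈ t)
    _ ≤ ∑ t ∈ G.cliquesThrough k A, k := sum_le_sum fun t ht ↦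
        (card_le_card fun u hu ↦ (mem_filter.1 hu).2).trans
          (mem_cliqueFinset_iff.1 (mem_filter.1 ht).1).card_eq.le
    _ = k * #(G.cliquesThrough k A) := by rw [sum_const, smul_eq_mul, mul_comm]

lemma exists_adj_card_mul_le {k : ℕ} {s Z : Finset V} {B : ℝ} (hB : 0 ≤ B) (hZ : Z.Nonempty)
    (h : ∀ u ∈ Z, ∃ p ∈ s, ∃ q ∈ s, G.Adj p q ∧
      B ≤ #(G.cliquesThrough k (insert u {p, q}))) :
    ∃ p ∈ s, ∃ q ∈ s, G.Adj p q ∧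
      #Z * B ≤ #s ^ 2 * k * #(G.cliquesThrough k {p, q}) := by
  choose! p hp q hq hpq hcount using h
  obtain ⟨u₀, hu₀⟩ := hZ
  have hs : (0 : ℝ) < #s := by exact_mod_cast card_pos.2 ⟨p u₀, hp u₀ hu₀⟩
  obtain ⟨⟨a, b⟩, -, hfiber⟩ := exists_le_card_fiber_of_nsmul_le_card_of_maps_to
    (f := fun u ↦ (p u, q u)) (b := (#Z / #s ^ 2 : ℝ))
    (fun u hu ↦ mem_product.2 ⟨hp u hu, hq u hu⟩)
    ⟨(p u₀, q u₀), mem_product.2 ⟨hp u₀ hu₀, hq u₀ hu₀⟩⟩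
    (by rw [card_product, nsmul_eq_mul, Nat.cast_mul, ← sq, mul_div_cancel₀ _ (by positivity)])
  set F := {u ∈ Z | (p u, q u) = (a, b)}
  have hF : (0 : ℝ) < #F := hfiber.trans_lt' (by have := card_pos.2 ⟨u₀, hu₀⟩; positivity)
  obtain ⟨u₁, hu₁⟩ := card_pos.1 (by exact_mod_cast hF)
  obtain ⟨hu₁Z, hab⟩ := mem_filter.1 hu₁
  obtain ⟨rfl, rfl⟩ := Prod.mk.inj hab
  refine ⟨_, hp u₁ hu₁Z, _, hq u₁ hu₁Z, hpq u₁ hu₁Z, ?_⟩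
  have hFB : #F * B ≤ k * #(G.cliquesThrough k {p u₁, q u₁}) := calc
    #F * B ≤ ∑ u ∈ F, (#(G.cliquesThrough k (insert u {p u₁, q u₁})) : ℝ) := by
      rw [← nsmul_eq_mul]
      refine card_nsmul_le_sum _ _ _ fun u hu ↦ ?_
      obtain ⟨huZ, hu⟩ := mem_filter.1 hu
      obtain ⟨hpu, hqu⟩ := Prod.mk.inj hu
      simpa [hpu, hqu] using hcount u huZ
    _ ≤ k * #(G.cliquesThrough k {p u₁, q u₁}) := by
      exact_mod_cast G.sum_card_cliquesThrough_insert_le k _ F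
  calc (#Z : ℝ) * B = #s ^ 2 * (#Z / #s ^ 2 * B) := by field_simp
    _ ≤ #s ^ 2 * (#F * B) := by gcongr
    _ ≤ #s ^ 2 * k * #(G.cliquesThrough k {p u₁, q u₁}) := by
      rw [mul_assoc]
      gcongr

lemma card_cliquesThrough_induce_neighborSet_le (k : ℕ) (u : V) (A : Finset (G.neighborSet u)) :
    #((G.induce (G.neighborSet u)).cliquesThrough k A) ≤
      #(G.cliquesThrough (k + 1) (insert u (A.map (.subtype _)))) := by
  have hu (t : Finset (G.neighborSet u)) : u ∉ t.map (.subtype _) := by simp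
  refine card_le_card_of_injOn (fun t ↦ insert u (t.map (.subtype _))) (fun t ht ↦ ?_) ?_
  · simp only [cliquesThrough, coe_filter, Set.mem_ofPred_eq, mem_cliqueFinset_iff] at ht ⊢
    refine ⟨((isNClique_induce_iff _ _ _).1 ht.1).insert fun v hv ↦ ?_,
      insert_subset_insert _ (map_subset_map.2 ht.2)⟩
    obtain ⟨x, -, rfl⟩ := mem_map.1 hv
    exact x.2
  · intro t₁ _ t₂ _ h
    simpa [erase_insert (hu _)] using congr_arg (erase · u) h

def EveryCliqueHasHeavyEdge (k : ℕ) (T : ℝ) : Prop :=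
  ∀ s ∈ G.cliqueFinset k, ∃ p ∈ s, ∃ q ∈ s, G.Adj p q ∧
    T ≤ #(G.cliquesThrough k {p, q})

theorem EveryCliqueHasHeavyEdge.exists_cliqueFree_deleteEdges {G : SimpleGraph V}
    [DecidableRel G.Adj] {r : ℕ} {T : ℝ} (h : G.EveryCliqueHasHeavyEdge r T) :
    ∃ E ⊆ G.edgeFinset, #E * T ≤ (r + 1).choose 2 * #(G.cliqueFinset r) ∧
      (G.deleteEdges E).CliqueFree r := by
  set E := {e ∈ G.edgeFinset | T ≤ #{t ∈ G.cliqueFinset r | e ∈ t.sym2}}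
  refine ⟨E, filter_subset _ _, ?_, ?_⟩
  · have := card_nsmul_le_card_nsmul (R := ℝ) (fun e t ↦ e ∈ t.sym2) (s := E)
      (t := G.cliqueFinset r) (n := ((r + 1).choose 2 : ℕ)) (fun e he ↦ (mem_filter.1 he).2)
      fun t ht ↦ by
        rw [← (mem_cliqueFinset_iff.1 ht).card_eq, ← card_sym2]
        exact_mod_cast card_le_card fun e he ↦ (mem_filter.1 he).2
    simpa only [nsmul_eq_mul, mul_comm] using this
  · intro t ht
    obtain ⟨p, hp, q, hq, hpq, hT⟩ := h t (mem_cliqueFinset_iff.2 (ht.mono (deleteEdges_le _)))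
    have hE : s(p, q) ∈ E := by
      refine mem_filter.2 ⟨G.mem_edgeFinset.2 hpq, hT.trans_eq ?_⟩
      congr 2
      ext t
      simp [cliquesThrough, insert_subset_iff]
    exact (deleteEdges_adj.1 (ht.1 hp hq hpq.ne)).2 hE

end SimpleGraph

noncomputable def minDegreeThreshold (r : ℕ) : ℝ := (2 * r - 5) / (2 * r - 3)

lemma minDegreeThreshold_succ (k : ℕ) :
    minDegreeThreshold (k + 1) = (2 * k - 3) / (2 * k - 1) := by
  rw [minDegreeThreshold]
  push_cast
  ring_nf

/-- Passing to the neighbourhood of a vertex carries the threshold for `k + 1` exactly onto the one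
for `k`: with `a = 2/(2k-1)` and `b = 2/(2k-3)` the two thresholds are `1 - a` and `1 - b`, and
`b - a = a * b`. -/
lemma minDegreeThreshold_add_mul_le {k : ℕ} (hk : 2 ≤ k) {α n d m : ℝ} (hα : 0 ≤ α)
    (hn : 0 < n) (hd : (minDegreeThreshold (k + 1) + α) * n ≤ d) (hdm : d ≤ m)
    (hmn : m ≤ n) :
    (minDegreeThreshold k + α) * m ≤ d + m - n := by
  have hk' : (2 : ℝ) ≤ k := by exact_mod_cast hk
  set a : ℝ := 2 / (2 * k - 1)
  set b : ℝ := 2 / (2 * k - 3)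
  have ha : 0 < a := div_pos two_pos (by linarith)
  have hb : 0 < b := div_pos two_pos (by linarith)
  have hab : b - a = a * b := by
    simp only [a, b]
    field_simp [show (2 * k - 1 : ℝ) ≠ 0 by linarith, show (2 * k - 3 : ℝ) ≠ 0 by linarith]
    ring
  have hta : minDegreeThreshold (k + 1) = 1 - a := by
    rw [minDegreeThreshold_succ]
    simp only [a]
    field_simp [show (2 * k - 1 : ℝ) ≠ 0 by linarith]
    ring
  have htb : minDegreeThreshold k = 1 - b := by
    simp only [minDegreeThreshold, b]
    field_simp [show (2 * k - 3 : ℝ) ≠ 0 by linarith]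
    ring
  rw [hta] at hd
  rw [htb]
  have hαa : α ≤ a := by nlinarith
  have h₁ : (a - α) * n ≤ (b - α) * ((1 - a + α) * n) := by
    have : (b - α) * (1 - a + α) - (a - α) = α * (a + b - α) := by linear_combination hab
    nlinarith [mul_nonneg (mul_nonneg hα (by linarith : 0 ≤ a + b - α)) hn.le]
  have h₂ : (b - α) * ((1 - a + α) * n) ≤ (b - α) * m :=
    mul_le_mul_of_nonneg_left (hd.trans hdm) (by nlinarith)
  linarith

universe u

def IsHeavyEdgeConstant (k : ℕ) (C : ℝ) : Prop :=
  ∀ (V : Type u) [Fintype V] [DecidableEq V] (G : SimpleGraph V) [DecidableRel G.Adj] (α : ℝ),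
    0 < α → (minDegreeThreshold k + α) * Fintype.card V ≤ G.minDegree →
      G.EveryCliqueHasHeavyEdge k (α / C * Fintype.card V ^ (k - 2))

lemma isHeavyEdgeConstant_three : IsHeavyEdgeConstant.{u} 3 18 := by
  intro V _ _ G _ α hα hδ s hs
  obtain ⟨hs, hs3⟩ := mem_cliqueFinset_iff.1 hs
  set n : ℝ := (Fintype.card V : ℝ)
  rw [show minDegreeThreshold 3 = 1 / 3 by norm_num [minDegreeThreshold]] at hδ
  set Z : Finset V := {z | #s ≤ #{v ∈ s | G.Adj z v} + 1}
  have hZ : 3 / 2 * α * n ≤ #Z := by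
    have := G.card_mul_minDegree_le s
    rw [show (#s : ℝ) = 3 by exact_mod_cast hs3] at this
    linarith
  have hB : ∀ u ∈ Z, ∃ p ∈ s, ∃ q ∈ s, G.Adj p q ∧
      (1 : ℝ) ≤ #(G.cliquesThrough 3 (insert u {p, q})) := by
    intro u hu
    obtain ⟨p, hp, q, hq, hpq⟩ := one_lt_card.1 (show 1 < #{v ∈ s | G.Adj u v} by
      have := (mem_filter.1 hu).2; omega)
    obtain ⟨hps, hup⟩ := mem_filter.1 hp
    obtain ⟨hqs, huq⟩ := mem_filter.1 hq
    have hpq : G.Adj p q := hs hps hqs hpq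
    refine ⟨p, hps, q, hqs, hpq, ?_⟩
    have htri : G.IsNClique 3 (insert u {p, q}) := is3Clique_triple_iff.2 ⟨hup, huq, hpq⟩
    have : insert u {p, q} ∈ G.cliquesThrough 3 (insert u {p, q}) :=
      mem_filter.2 ⟨mem_cliqueFinset_iff.2 htri, subset_rfl⟩
    exact_mod_cast card_pos.2 ⟨_, this⟩
  obtain ⟨v, -⟩ : s.Nonempty := by rw [← card_pos, hs3]; omega
  have hn : 0 < n := Nat.cast_pos.2 (Fintype.card_pos_iff.2 ⟨v⟩)
  have hZ₀ : (0 : ℝ) < #Z := hZ.trans_lt' (by positivity)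
  obtain ⟨p, hp, q, hq, hpq, hcount⟩ :=
    G.exists_adj_card_mul_le zero_le_one (card_pos.1 (by exact_mod_cast hZ₀)) hB
  refine ⟨p, hp, q, hq, hpq, ?_⟩
  rw [hs3] at hcount
  push_cast at hcount
  norm_num
  linarith

namespace IsHeavyEdgeConstant

variable {k : ℕ} {C : ℝ}

lemma exists_adj_le_card_cliquesThrough_insert (hC : IsHeavyEdgeConstant.{u} k C) (hk : 2 ≤ k)
    {V : Type u} [Fintype V] [DecidableEq V] {G : SimpleGraph V} [DecidableRel G.Adj] {α : ℝ}
    (hα : 0 < α) (hδ : (minDegreeThreshold (k + 1) + α) * Fintype.card V ≤ G.minDegree)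
    {u : V} {s : Finset V} (hs : G.IsNClique k s) (hsu : ∀ v ∈ s, G.Adj u v) :
    ∃ p ∈ s, ∃ q ∈ s, G.Adj p q ∧
      α / C * G.degree u ^ (k - 2) ≤ #(G.cliquesThrough (k + 1) (insert u {p, q})) := by
  set H := G.induce (G.neighborSet u)
  have hs' : H.IsNClique k (s.subtype (· ∈ G.neighborSet u)) := by
    rwa [isNClique_induce_iff, subtype_map_of_mem (p := (· ∈ G.neighborSet u)) hsu]
  have hH : (minDegreeThreshold k + α) * Fintype.card (G.neighborSet u) ≤ H.minDegree := by
    have hsum : (G.degree u + G.minDegree : ℝ) ≤ H.minDegree + Fintype.card V := by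
      exact_mod_cast G.degree_add_minDegree_le_minDegree_induce_neighborSet u
    have hV : (0 : ℝ) < Fintype.card V := by exact_mod_cast Fintype.card_pos_iff.2 ⟨u⟩
    have hδu : (G.minDegree : ℝ) ≤ G.degree u := by exact_mod_cast G.minDegree_le_degree u
    have hun : (G.degree u : ℝ) ≤ Fintype.card V := by
      exact_mod_cast (G.degree_lt_card_verts u).le
    rw [card_neighborSet_eq_degree]
    linarith [minDegreeThreshold_add_mul_le hk hα.le hV hδ hδu hun]
  obtain ⟨p, hp, q, hq, hpq, hcount⟩ := hC _ H α hα hH _ (mem_cliqueFinset_iff.2 hs')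
  refine ⟨p, mem_subtype.1 hp, q, mem_subtype.1 hq, hpq, ?_⟩
  rw [card_neighborSet_eq_degree] at hcount
  refine hcount.trans ?_
  exact_mod_cast (G.card_cliquesThrough_induce_neighborSet_le k u {p, q}).trans_eq (by simp)

lemma succ (hC : IsHeavyEdgeConstant.{u} k C) (hk : 3 ≤ k) (hC₀ : 0 < C) :
    IsHeavyEdgeConstant.{u} (k + 1) (C * (2 * k - 1) * 3 ^ (k - 2) * (k + 1) ^ 3) := by
  intro V _ _ G _ α hα hδ s hs
  obtain ⟨hs, hsk⟩ := mem_cliqueFinset_iff.1 hs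
  set n : ℝ := (Fintype.card V : ℝ)
  have hk' : (3 : ℝ) ≤ k := by exact_mod_cast hk
  obtain ⟨v, -⟩ : s.Nonempty := by rw [← card_pos, hsk]; omega
  have hn : 0 < n := Nat.cast_pos.2 (Fintype.card_pos_iff.2 ⟨v⟩)
  have hδ' : (2 * k - 3) / (2 * k - 1) * n ≤ G.minDegree := by
    rw [minDegreeThreshold_succ] at hδ
    nlinarith
  set Z : Finset V := {z | #s ≤ #{v ∈ s | G.Adj z v} + 1}
  have hZ : n / (2 * k - 1) ≤ #Z := by
    have := G.card_mul_minDegree_le s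
    rw [show (#s : ℝ) = k + 1 by exact_mod_cast hsk] at this
    rw [div_le_iff₀ (by linarith)]
    rw [div_mul_eq_mul_div, div_le_iff₀ (by linarith)] at hδ'
    nlinarith
  set B : ℝ := α / C * (n / 3) ^ (k - 2)
  have hB : ∀ u ∈ Z, ∃ p ∈ s, ∃ q ∈ s, G.Adj p q ∧
      B ≤ #(G.cliquesThrough (k + 1) (insert u {p, q})) := by
    intro u hu
    have hsu : k ≤ #{v ∈ s | G.Adj u v} := by
      have := (mem_filter.1 hu).2
      omega
    obtain ⟨t, hts, htk⟩ := exists_subset_card_eq hsu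
    have ht : G.IsNClique k t := ⟨hs.subset fun v hv ↦ (mem_filter.1 (hts hv)).1, htk⟩
    obtain ⟨p, hp, q, hq, hpq, hcount⟩ := hC.exists_adj_le_card_cliquesThrough_insert
      (by omega) hα hδ ht fun v hv ↦ (mem_filter.1 (hts hv)).2
    refine ⟨p, (mem_filter.1 (hts hp)).1, q, (mem_filter.1 (hts hq)).1, hpq, hcount.trans' ?_⟩
    have hu : n / 3 ≤ G.degree u := by
      have : (G.minDegree : ℝ) ≤ G.degree u := by exact_mod_cast G.minDegree_le_degree u
      have : n / 3 ≤ (2 * k - 3) / (2 * k - 1) * n := by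
        rw [div_mul_eq_mul_div, le_div_iff₀ (by linarith)]
        nlinarith
      linarith
    show α / C * (n / 3) ^ (k - 2) ≤ _
    gcongr
  have hZ₀ : (0 : ℝ) < #Z := hZ.trans_lt' (div_pos hn (by linarith))
  obtain ⟨p, hp, q, hq, hpq, hcount⟩ :=
    G.exists_adj_card_mul_le (by positivity) (card_pos.1 (by exact_mod_cast hZ₀)) hB
  refine ⟨p, hp, q, hq, hpq, ?_⟩
  rw [hsk] at hcount
  push_cast at hcount
  calc α / (C * (2 * k - 1) * 3 ^ (k - 2) * (k + 1) ^ 3) * n ^ (k + 1 - 2)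
      = n / (2 * k - 1) * B / (k + 1) ^ 3 := by
        rw [show k + 1 - 2 = k - 2 + 1 by omega, pow_succ n]
        simp only [B, div_pow]
        field_simp
    _ ≤ #Z * B / (k + 1) ^ 3 := by gcongr
    _ ≤ #(G.cliquesThrough (k + 1) {p, q}) := by
        rw [div_le_iff₀ (by positivity)]
        linarith

end IsHeavyEdgeConstant

theorem exists_isHeavyEdgeConstant {k : ℕ} (hk : 3 ≤ k) :
    ∃ C > 0, IsHeavyEdgeConstant.{u} k C := by
  induction k, hk using Nat.le_induction with
  | base => exact ⟨18, by norm_num, isHeavyEdgeConstant_three⟩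
  | succ k hk ih =>
    obtain ⟨C, hC₀, hC⟩ := ih
    have : (3 : ℝ) ≤ k := by exact_mod_cast hk
    have : (0 : ℝ) < 2 * k - 1 := by linarith
    exact ⟨_, by positivity, hC.succ hk hC₀⟩

theorem clique_removal_above_threshold (r : ℕ) (hr : 3 ≤ r) :
    ∃ μ : ℝ, 0 < μ ∧
      ∀ (α ε : ℝ), 0 < α → 0 < ε →
        ∀ (V : Type) [Fintype V] [DecidableEq V] (G : SimpleGraph V)
          [DecidableRel G.Adj] (n : ℕ),
          Fintype.card V = n →
          ((2 * (r : ℝ) - 5) / (2 * r - 3) + α) * n ≤ G.minDegree →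
          ((G.cliqueFinset r).card : ℝ) ≤ μ * α * ε * (n : ℝ) ^ r →
          ∃ E : Finset (Sym2 V), E ⊆ G.edgeFinset ∧ (E.card : ℝ) ≤ ε * (n : ℝ) ^ 2 ∧
            (G.deleteEdges ↑E).CliqueFree r := by
  obtain ⟨C, hC₀, hC⟩ := exists_isHeavyEdgeConstant.{0} hr
  have hr₂ : (0 : ℝ) < (r + 1).choose 2 := by exact_mod_cast Nat.choose_pos (by omega)
  refine ⟨1 / (C * (r + 1).choose 2), by positivity, ?_⟩
  intro α ε hα hε V _ _ G _ n hn hδ hcount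
  subst hn
  obtain ⟨E, hEG, hE, hfree⟩ := (hC V G α hα hδ).exists_cliqueFree_deleteEdges
  refine ⟨E, hEG, ?_, hfree⟩
  rcases (Fintype.card V).eq_zero_or_pos with hV | hV
  · have : #E = 0 := Nat.eq_zero_of_le_zero <| (card_le_card hEG).trans <| by
      simpa [hV] using G.card_edgeFinset_le_card_choose_two
    simp [this]
    positivity
  · set T := α / C * (Fintype.card V : ℝ) ^ (r - 2)
    refine le_of_mul_le_mul_right ?_ (by positivity : 0 < T)
    calc #E * T ≤ (r + 1).choose 2 * #(G.cliqueFinset r) := hE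
      _ ≤ (r + 1).choose 2 * (1 / (C * (r + 1).choose 2) * α * ε * Fintype.card V ^ r) := by
        gcongr
      _ = ε * Fintype.card V ^ 2 * T := by
        rw [← pow_sub_mul_pow _ (show 2 ≤ r by omega)]
        simp only [T]
        field_simp
end

section
/- Let H₀ be a graph and H = H₀ × K₃ the tensor product with K₃. Suppose E* ⊆ E(H) is a set of edges whose deletion makes H triangle-free. Let E₀* ⊆ E(H₀) be the set of edges {v,w} such that some edge of E* has the form {(v,x),(w,y)}. Then deleting E₀* from H₀ makes H₀ triangle-free, and |E₀*| ≤ |E*|. -/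
open Finset SimpleGraph
open scoped Classical

/-- The tensor (categorical) product of a graph with `K₃`. -/
def tensorK3 {V : Type*} (H : SimpleGraph V) : SimpleGraph (V × Fin 3) where
  Adj a b := a.2 ≠ b.2 ∧ H.Adj a.1 b.1
  symm := by
    constructor
    intro a b h
    exact ⟨Ne.symm h.1, h.2.symm⟩
  loopless := by
    constructor
    intro a h
    exact h.1 rfl

section

variable {V : Type*} {H₀ : SimpleGraph V} {E : Set (Sym2 (V × Fin 3))}

lemma tensorK3_deleteEdges_adj_of_adj {v w : V} {x y : Fin 3} (hxy : x ≠ y)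
    (h : (H₀.deleteEdges (Sym2.map Prod.fst '' E)).Adj v w) :
    ((tensorK3 H₀).deleteEdges E).Adj (v, x) (w, y) := by
  rw [deleteEdges_adj] at h ⊢
  exact ⟨⟨hxy, h.1⟩, fun hE => h.2 ⟨_, hE, rfl⟩⟩

/-- A triangle `abc` of the projected graph lifts to the triangle `(a,0)(b,1)(c,2)`. -/
lemma cliqueFree_three_of_tensorK3_deleteEdges
    (h : ((tensorK3 H₀).deleteEdges E).CliqueFree 3) :
    (H₀.deleteEdges (Sym2.map Prod.fst '' E)).CliqueFree 3 := by
  intro t ht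
  obtain ⟨a, b, c, hab, hac, hbc, rfl⟩ := is3Clique_iff.1 ht
  refine h {(a, 0), (b, 1), (c, 2)} (is3Clique_iff.2 ⟨_, _, _, ?_, ?_, ?_, rfl⟩) <;>
    exact tensorK3_deleteEdges_adj_of_adj (by decide) ‹_›

end

theorem tensorK3_edge_deletion_general {V : Type*} [DecidableEq V]
    (H₀ : SimpleGraph V)
    (E : Finset (Sym2 (V × Fin 3)))
    (hdel : ((tensorK3 H₀).deleteEdges ↑E).CliqueFree 3) :
    (H₀.deleteEdges ↑(E.image (Sym2.map Prod.fst))).CliqueFree 3 ∧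
      (E.image (Sym2.map Prod.fst)).card ≤ E.card := by
  refine ⟨?_, card_image_le⟩
  rw [coe_image]
  exact cliqueFree_three_of_tensorK3_deleteEdges hdel

theorem tensorK3_edge_deletion {V : Type*} [Fintype V] [DecidableEq V]
    (H₀ : SimpleGraph V) [DecidableRel H₀.Adj]
    (E : Finset (Sym2 (V × Fin 3))) (hE : E ⊆ (tensorK3 H₀).edgeFinset)
    (hdel : ((tensorK3 H₀).deleteEdges ↑E).CliqueFree 3) :
    (H₀.deleteEdges ↑(E.image (Sym2.map Prod.fst))).CliqueFree 3 ∧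
      (E.image (Sym2.map Prod.fst)).card ≤ E.card :=
  tensorK3_edge_deletion_general H₀ E hdel
end

section
/- Suppose that for some n₀, ε, δ > 0 there is an n₀-vertex graph H₀ with at most δ·n₀³ triangles such that at least ε·n₀² edges must be deleted from H₀ to make it triangle-free. Then there exists a tripartite graph H on n = 3n₀ vertices with at most (2/9)·δ·n³ triangles such that at least (1/9)·ε·n² edges must be deleted from H to make it triangle-free. -/
open Finset SimpleGraph
open scoped Classical

/-!
Take `H = H₀ × K₃`, where `(x, i) ~ (y, j)` iff `x ~ y` and `i ≠ j`, coloured by `i`. Projecting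
to `H₀` maps triangles to triangles, and a triangle of `H₀` has exactly `3! = 6` preimages, so `H`
has at most `6 δ n₀³ = (2/9) δ n³` triangles. Conversely, if deleting `E` makes `H` triangle-free,
then deleting the projection of `E` (which is no larger) makes `H₀` triangle-free, because a
triangle `x y z` of `H₀` lifts to `(x, 0) (y, 1) (z, 2)`. Hence `|E| ≥ ε n₀² = (1/9) ε n²`.
-/

theorem Finset.card_filter_image_fst_eq_le {V W : Type*} [DecidableEq V] [DecidableEq W]
    [Fintype W] {𝒯 : Finset (Finset (V × W))}
    (h𝒯 : ∀ T ∈ 𝒯, Set.InjOn Prod.fst (T : Set (V × W)) ∧ Set.InjOn Prod.snd (T : Set (V × W)))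
    (t : Finset V) :
    #{T ∈ 𝒯 | T.image Prod.fst = t} ≤ (Fintype.card W).descFactorial #t := by
  -- each such `T` is the graph of an embedding `t ↪ W`
  let graph (e : t ↪ W) : Finset (V × W) := univ.image fun x ↦ (x.1, e x)
  have hsub : {T ∈ 𝒯 | T.image Prod.fst = t} ⊆ univ.image graph := by
    intro T hT
    obtain ⟨hT𝒯, rfl⟩ := mem_filter.mp hT
    obtain ⟨hfst, hsnd⟩ := h𝒯 T hT𝒯
    have hfiber (x : T.image Prod.fst) : ∃ w, (x.1, w) ∈ T := by
      obtain ⟨p, hp, hpx⟩ := mem_image.mp x.2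
      exact ⟨p.2, by rwa [← hpx]⟩
    choose c hc using hfiber
    let e : T.image Prod.fst ↪ W :=
      ⟨c, fun x y hxy ↦ Subtype.ext (congrArg Prod.fst (hsnd (hc x) (hc y) hxy))⟩
    refine mem_image.mpr ⟨e, mem_univ _, ?_⟩
    ext ⟨a, b⟩
    constructor
    · intro hab
      obtain ⟨x, -, hx⟩ := mem_image.mp hab
      rw [← hx]
      exact hc x
    · intro hab
      have ha : a ∈ T.image Prod.fst := mem_image_of_mem Prod.fst hab
      exact mem_image.mpr ⟨⟨a, ha⟩, mem_univ _, hfst (hc ⟨a, ha⟩) hab rfl⟩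
  calc #{T ∈ 𝒯 | T.image Prod.fst = t}
      ≤ #(univ.image graph) := card_le_card hsub
    _ ≤ Fintype.card (t ↪ W) := card_image_le
    _ = (Fintype.card W).descFactorial #t := by simp

namespace SimpleGraph

variable {V W : Type*} (G : SimpleGraph V) (H : SimpleGraph W)

protected def tensorProd : SimpleGraph (V × W) where
  Adj p q := G.Adj p.1 q.1 ∧ H.Adj p.2 q.2
  symm := ⟨fun _ _ h ↦ ⟨h.1.symm, h.2.symm⟩⟩
  loopless := ⟨fun p h ↦ G.loopless.irrefl p.1 h.1⟩

variable {G H}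

@[simp]
theorem tensorProd_adj {p q : V × W} :
    (G.tensorProd H).Adj p q ↔ G.Adj p.1 q.1 ∧ H.Adj p.2 q.2 :=
  Iff.rfl

theorem IsClique.injOn_fst_of_tensorProd {s : Set (V × W)} (hs : (G.tensorProd H).IsClique s) :
    Set.InjOn Prod.fst s := fun _ hp _ hq h ↦
  of_not_not fun hne ↦ G.loopless.irrefl _ (h ▸ (hs hp hq hne).1)

theorem IsClique.injOn_snd_of_tensorProd {s : Set (V × W)} (hs : (G.tensorProd H).IsClique s) :
    Set.InjOn Prod.snd s := fun _ hp _ hq h ↦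
  of_not_not fun hne ↦ H.loopless.irrefl _ (h ▸ (hs hp hq hne).2)

theorem IsNClique.image_fst_of_tensorProd [DecidableEq V] {n : ℕ} {s : Finset (V × W)}
    (hs : (G.tensorProd H).IsNClique n s) : G.IsNClique n (s.image Prod.fst) := by
  refine ⟨?_, by rw [card_image_of_injOn hs.isClique.injOn_fst_of_tensorProd, hs.card_eq]⟩
  rw [coe_image]
  rintro _ ⟨p, hp, rfl⟩ _ ⟨q, hq, rfl⟩ hne
  exact (hs.isClique hp hq fun h ↦ hne (congrArg Prod.fst h)).1

theorem card_cliqueFinset_tensorProd_le [Fintype V] [Fintype W] [DecidableEq V] [DecidableEq W]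
    [DecidableRel G.Adj] [DecidableRel (G.tensorProd H).Adj] (n : ℕ) :
    #((G.tensorProd H).cliqueFinset n) ≤
      (Fintype.card W).descFactorial n * #(G.cliqueFinset n) := by
  refine card_le_mul_card_image_of_maps_to (f := fun T ↦ T.image Prod.fst) ?_ _ ?_
  · intro T hT
    exact mem_cliqueFinset_iff.mpr (mem_cliqueFinset_iff.mp hT).image_fst_of_tensorProd
  · intro t ht
    rw [← (mem_cliqueFinset_iff.mp ht).card_eq]
    refine card_filter_image_fst_eq_le (fun T hT ↦ ?_) t
    have hT := (mem_cliqueFinset_iff.mp hT).isClique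
    exact ⟨hT.injOn_fst_of_tensorProd, hT.injOn_snd_of_tensorProd⟩

theorem tensorProd_deleteEdges_image_fst_le (s : Set (Sym2 (V × W))) :
    (G.deleteEdges (Sym2.map Prod.fst '' s)).tensorProd H ≤ (G.tensorProd H).deleteEdges s := by
  intro p q hpq
  rw [tensorProd_adj, deleteEdges_adj] at hpq
  rw [deleteEdges_adj, tensorProd_adj]
  exact ⟨⟨hpq.1.1, hpq.2⟩, fun hs ↦ hpq.1.2 ⟨_, hs, rfl⟩⟩

theorem CliqueFree.of_tensorProd {n : ℕ} (h : (G.tensorProd H).CliqueFree n)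
    (hH : ¬H.CliqueFree n) : G.CliqueFree n := by
  by_contra hG
  obtain ⟨f⟩ := (not_cliqueFree_iff_top_isContained n).mp hG
  obtain ⟨g⟩ := (not_cliqueFree_iff_top_isContained n).mp hH
  let pair : completeGraph (Fin n) →g G.tensorProd H :=
    ⟨fun i ↦ (f i, g i), fun hij ↦ ⟨f.toHom.map_adj hij, g.toHom.map_adj hij⟩⟩
  exact IsContained.not_cliqueFree ⟨⟨pair, fun i j hij ↦ f.injective (congrArg Prod.fst hij)⟩⟩ h

end SimpleGraph

theorem make_tripartite_general (n₀ : ℕ) (ε δ : ℝ) {V₀ : Type} [Fintype V₀] [DecidableEq V₀]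
    (H₀ : SimpleGraph V₀) [DecidableRel H₀.Adj]
    (htri : ((H₀.cliqueFinset 3).card : ℝ) ≤ δ * (n₀ : ℝ) ^ 3)
    (hdel : ∀ E : Finset (Sym2 V₀),
      (H₀.deleteEdges ↑E).CliqueFree 3 → ε * (n₀ : ℝ) ^ 2 ≤ E.card) :
    ∃ (H : SimpleGraph (V₀ × Fin 3)) (f : V₀ × Fin 3 → Fin 3),
      (∀ u v, H.Adj u v → f u ≠ f v) ∧
      ((H.cliqueFinset 3).card : ℝ) ≤ 2 / 9 * δ * ((3 * n₀ : ℕ) : ℝ) ^ 3 ∧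
      ∀ E : Finset (Sym2 (V₀ × Fin 3)),
        (H.deleteEdges ↑E).CliqueFree 3 → 1 / 9 * ε * ((3 * n₀ : ℕ) : ℝ) ^ 2 ≤ E.card := by
  have hn : ((3 * n₀ : ℕ) : ℝ) = 3 * n₀ := by push_cast; ring
  rw [hn]
  refine ⟨H₀.tensorProd ⊤, Prod.snd, fun _ _ h ↦ h.2, ?_, fun E hE ↦ ?_⟩
  · have hcount : #((H₀.tensorProd (⊤ : SimpleGraph (Fin 3))).cliqueFinset 3)
        ≤ 6 * #(H₀.cliqueFinset 3) := card_cliqueFinset_tensorProd_le 3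
    have hcount_real : (#((H₀.tensorProd (⊤ : SimpleGraph (Fin 3))).cliqueFinset 3) : ℝ)
        ≤ 6 * #(H₀.cliqueFinset 3) := by exact_mod_cast hcount
    linarith
  · have hfree : (H₀.deleteEdges ↑(E.image (Sym2.map Prod.fst))).CliqueFree 3 := by
      rw [coe_image]
      exact (hE.anti (tensorProd_deleteEdges_image_fst_le _)).of_tensorProd
        (IsContained.not_cliqueFree .rfl)
    have hcard : (#(E.image (Sym2.map Prod.fst)) : ℝ) ≤ #E := by exact_mod_cast card_image_le
    linarith [hdel _ hfree]

theorem make_tripartite (n₀ : ℕ) (ε δ : ℝ) {V₀ : Type} [Fintype V₀] [DecidableEq V₀]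
    (H₀ : SimpleGraph V₀) [DecidableRel H₀.Adj] (hcard : Fintype.card V₀ = n₀)
    (htri : ((H₀.cliqueFinset 3).card : ℝ) ≤ δ * (n₀ : ℝ) ^ 3)
    (hdel : ∀ E : Finset (Sym2 V₀),
      (H₀.deleteEdges ↑E).CliqueFree 3 → ε * (n₀ : ℝ) ^ 2 ≤ E.card) :
    ∃ (H : SimpleGraph (V₀ × Fin 3)) (f : V₀ × Fin 3 → Fin 3),
      (∀ u v, H.Adj u v → f u ≠ f v) ∧
      ((H.cliqueFinset 3).card : ℝ) ≤ 2 / 9 * δ * ((3 * n₀ : ℕ) : ℝ) ^ 3 ∧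
      ∀ E : Finset (Sym2 (V₀ × Fin 3)),
        (H.deleteEdges ↑E).CliqueFree 3 → 1 / 9 * ε * ((3 * n₀ : ℕ) : ℝ) ^ 2 ≤ E.card :=
  make_tripartite_general n₀ ε δ H₀ htri hdel
end

section
/- Let H be a bipartite graph with parts A and B, |A| = a, |B| = b, containing a vertex u ∈ B of degree 1. Suppose H is a subgraph of the graph obtained from the complete bipartite graph K_{a,b−1} by adding one pendant edge to a vertex of the first part. Then for every γ > 0 there is c > 0 such that in any n-vertex graph G with minimum degree at least γ·n, every edge of G lies in at least c·n^{a+b−2} copies of H (for all sufficiently large n). -/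
open Finset SimpleGraph
open scoped Classical

/-- The complete bipartite graph `K_{a,b-1}` (parts `Fin a` and the first `b-1`
vertices of `Fin b`) together with one pendant edge attached to the vertex `0`
of the first part (the pendant vertex being the last vertex of `Fin b`). -/
def pendantGraph (a b : ℕ) : SimpleGraph (Fin a ⊕ Fin b) :=
  SimpleGraph.fromRel (fun x y =>
    match x, y with
    | Sum.inl i, Sum.inr j => (j : ℕ) < b - 1 ∨ ((i : ℕ) = 0 ∧ (j : ℕ) = b - 1)
    | _, _ => False)

/-! Let `u'` be the neighbour of the pendant vertex `u`, and consider the maps with `u ↦ w`,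
`u' ↦ v` that join every vertex of `A \ {u'}` and `v` to every vertex of `B \ {u}`; they are
homomorphisms of `H`. Once the image `g` of `A \ {u'}` is chosen, each vertex of `B \ {u}` may
go anywhere in the common neighbourhood `S g` of `v` and `g(A \ {u'})`, so there are
`∑_g |S g|^(b-1)` such maps. Double counting gives `∑_g |S g| = ∑_{y ∈ N(v)} deg(y)^(a-1)
≥ (γn)^a`, and the power mean inequality over the `n^(a-1)` choices of `g` turns this into
`γ^(a(b-1)) n^(a+b-2)` maps. At most `(a+b)^2 n^(a+b-3)` of them are not injective, and the
injective ones are copies of `H` through the edge `vw`. -/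

section

variable {ι V : Type*} [DecidableEq ι]

lemma card_le_pow_card_of_injOn_restrict [Fintype V] {D : Finset (ι → V)} {R : Finset ι}
    (h : Set.InjOn R.restrict (D : Set (ι → V))) : #D ≤ Fintype.card V ^ #R := by
  simpa using card_le_card_of_injOn R.restrict (t := univ) (by simp [Set.MapsTo]) h

variable [Fintype ι]

lemma card_piFinset_ite_singleton (A : Finset ι) (t : Finset V) (c : ι → V) :
    #(Fintype.piFinset fun z => if z ∈ A then t else {c z}) = #t ^ #A := by
  simp [Fintype.card_piFinset, apply_ite card, prod_ite_mem]

lemma mem_piFinset_ite_singleton {A : Finset ι} {t : Finset V} {c : ι → V} {f : ι → V} :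
    f ∈ Fintype.piFinset (fun z => if z ∈ A then t else {c z}) ↔
      (∀ z ∈ A, f z ∈ t) ∧ ∀ z ∉ A, f z = c z := by
  simp only [Fintype.mem_piFinset]
  constructor
  · intro h
    refine ⟨fun z hz => by simpa [hz] using h z, fun z hz => by simpa [hz] using h z⟩
  · rintro ⟨h1, h2⟩ z
    by_cases hz : z ∈ A <;> simp [hz, h1, h2]

variable [Fintype V]

lemma sum_card_commonNeighbors_eq_sum_degree_pow (G : SimpleGraph V) [DecidableRel G.Adj]
    (v : V) (A : Finset ι) (c : ι → V) :
    ∑ g ∈ Fintype.piFinset (fun z => if z ∈ A then univ else {c z}),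
        #{y ∈ G.neighborFinset v | ∀ x ∈ A, G.Adj (g x) y} =
      ∑ y ∈ G.neighborFinset v, G.degree y ^ #A := by
  simp only [card_filter]
  rw [sum_comm]
  refine sum_congr rfl fun y _ => ?_
  rw [← card_filter]
  have : ({g ∈ Fintype.piFinset (fun z => if z ∈ A then univ else {c z}) |
      ∀ x ∈ A, G.Adj (g x) y} : Finset (ι → V)) =
      Fintype.piFinset (fun z => if z ∈ A then G.neighborFinset y else {c z}) := by
    ext g
    simp only [mem_filter, mem_piFinset_ite_singleton, mem_univ,
      implies_true, true_and, mem_neighborFinset]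
    exact ⟨fun ⟨hc, hy⟩ => ⟨fun z hz => (hy z hz).symm, hc⟩,
      fun ⟨hy, hc⟩ => ⟨hc, fun x hx => (hy x hx).symm⟩⟩
  rw [this, card_piFinset_ite_singleton, card_neighborFinset_eq_degree]

variable [DecidableEq V]

lemma card_pinned_not_injective_le {P : Finset ι} {c : ι → V} (hc : Set.InjOn c P) :
    #{f : ι → V | (∀ z ∈ P, f z = c z) ∧ ¬ Function.Injective f}
      ≤ Fintype.card ι ^ 2 * Fintype.card V ^ (Fintype.card ι - #P - 1) := by
  set collide : ι × ι → Finset (ι → V) := fun p =>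
    {f | (∀ z ∈ P, f z = c z) ∧ p.1 ≠ p.2 ∧ p.2 ∉ P ∧ f p.1 = f p.2}
  have hcover : ({f | (∀ z ∈ P, f z = c z) ∧ ¬ Function.Injective f} : Finset (ι → V))
      ⊆ univ.biUnion collide := by
    intro f hf
    simp only [mem_filter, mem_univ, true_and, Function.not_injective_iff] at hf
    obtain ⟨hpin, x, y, hxy, hne⟩ := hf
    simp only [mem_biUnion, mem_univ, true_and, collide, mem_filter, Prod.exists]
    by_cases hy : y ∈ P
    · have hx : x ∉ P := fun hx => hne (hc hx hy (by rw [← hpin x hx, ← hpin y hy, hxy]))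
      exact ⟨y, x, hpin, hne.symm, hx, hxy.symm⟩
    · exact ⟨x, y, hpin, hne, hy, hxy⟩
  -- a collision `f x = f y` with `y ∉ P` determines `f` from its values off `insert y P`
  have hT : ∀ p, #(collide p) ≤ Fintype.card V ^ (Fintype.card ι - #P - 1) := by
    rintro ⟨x, y⟩
    by_cases hp : x ≠ y ∧ y ∉ P
    · have hR : #(insert y P)ᶜ = Fintype.card ι - #P - 1 := by
        rw [card_compl, card_insert_of_notMem hp.2]; omega
      rw [← hR]
      apply card_le_pow_card_of_injOn_restrict
      intro f hf g hg hfg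
      simp only [collide, coe_filter, mem_univ, true_and, Set.mem_ofPred_eq] at hf hg
      have hoff : ∀ z ≠ y, f z = g z := by
        intro z hz
        by_cases hzP : z ∈ P
        · rw [hf.1 z hzP, hg.1 z hzP]
        · exact congrFun hfg ⟨z, by simp [hz, hzP]⟩
      funext z
      by_cases hz : z = y
      · rw [hz, ← hf.2.2.2, ← hg.2.2.2, hoff x hp.1]
      · exact hoff z hz
    · have : collide (x, y) = ∅ := by
        simp only [collide, filter_eq_empty_iff]; tauto
      simp [this]
  calc _ ≤ #(univ.biUnion collide) := card_le_card hcover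
    _ ≤ ∑ p, #(collide p) := card_biUnion_le
    _ ≤ ∑ _p : ι × ι, Fintype.card V ^ (Fintype.card ι - #P - 1) :=
        sum_le_sum fun p _ => hT p
    _ = _ := by simp [Fintype.card_prod, sq]

variable (G : SimpleGraph V) [DecidableRel G.Adj]

def bipartiteExtensions (v : V) (A B : Finset ι) (c : ι → V) : Finset (ι → V) :=
  {f | (∀ z, z ∉ A → z ∉ B → f z = c z) ∧
    ∀ y ∈ B, G.Adj v (f y) ∧ ∀ x ∈ A, G.Adj (f x) (f y)}

variable {G} {v : V} {A B : Finset ι} {c : ι → V}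

lemma card_bipartiteExtensions (hAB : Disjoint A B) :
    #(bipartiteExtensions G v A B c) =
      ∑ g ∈ Fintype.piFinset (fun z => if z ∈ A then univ else {c z}),
        #{y ∈ G.neighborFinset v | ∀ x ∈ A, G.Adj (g x) y} ^ #B := by
  set S := fun g : ι → V => ({y ∈ G.neighborFinset v | ∀ x ∈ A, G.Adj (g x) y} : Finset V)
  have hmaps : Set.MapsTo (fun f z => if z ∈ B then c z else f z)
      (bipartiteExtensions G v A B c : Set (ι → V))
      (Fintype.piFinset (fun z => if z ∈ A then univ else {c z})) := by
    intro f hf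
    simp only [bipartiteExtensions, coe_filter, mem_univ, true_and] at hf
    simp only [mem_coe, mem_piFinset_ite_singleton, mem_univ, implies_true, true_and]
    intro z hz
    split_ifs with hzB
    · rfl
    · exact hf.1 z hz hzB
  -- the fibre over `g` lets each vertex of `B` range independently over `S g`
  rw [card_eq_sum_card_fiberwise hmaps]
  refine sum_congr rfl fun g hg => ?_
  rw [mem_piFinset_ite_singleton] at hg
  have hfiber : ({f ∈ bipartiteExtensions G v A B c |
      (fun z => if z ∈ B then c z else f z) = g} : Finset (ι → V)) =
      Fintype.piFinset (fun z => if z ∈ B then S g else {g z}) := by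
    ext f
    simp only [bipartiteExtensions, mem_filter, mem_univ, true_and, mem_piFinset_ite_singleton,
      S, mem_neighborFinset]
    constructor
    · rintro ⟨⟨-, hadj⟩, rfl⟩
      refine ⟨fun y hy => ⟨(hadj y hy).1, fun x hx => ?_⟩, fun z hz => (if_neg hz).symm⟩
      simpa only [if_neg (disjoint_left.1 hAB hx)] using (hadj y hy).2 x hx
    · rintro ⟨hB, hoff⟩
      have hfA : ∀ x ∈ A, f x = g x := fun x hx => hoff x (disjoint_left.1 hAB hx)
      refine ⟨⟨fun z hzA hzB => (hoff z hzB).trans (hg.2 z hzA), fun y hy => ?_⟩, ?_⟩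
      · refine ⟨(hB y hy).1, fun x hx => ?_⟩
        rw [hfA x hx]
        exact (hB y hy).2 x hx
      · funext z
        split_ifs with hz
        · exact (hg.2 z (disjoint_right.1 hAB hz)).symm
        · exact hoff z hz
  rw [hfiber, card_piFinset_ite_singleton]

lemma pow_le_card_bipartiteExtensions (hAB : Disjoint A B) (hB : B.Nonempty) {δ : ℝ}
    (hδ0 : 0 ≤ δ) (hδ : ∀ z, δ ≤ G.degree z) :
    δ ^ ((#A + 1) * #B) ≤
      (Fintype.card V : ℝ) ^ (#A * (#B - 1)) * #(bipartiteExtensions G v A B c) := by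
  obtain ⟨m, hm⟩ : ∃ m, #B = m + 1 := Nat.exists_eq_succ_of_ne_zero hB.card_pos.ne'
  set Gs := Fintype.piFinset (fun z => if z ∈ A then univ else {c z})
  set F : (ι → V) → ℝ := fun g => #{y ∈ G.neighborFinset v | ∀ x ∈ A, G.Adj (g x) y}
  have hsum : δ ^ (#A + 1) ≤ ∑ g ∈ Gs, F g := by
    have hdouble : ∑ g ∈ Gs, F g = ∑ y ∈ G.neighborFinset v, (G.degree y : ℝ) ^ #A := by
      simp only [Gs, F]
      exact_mod_cast sum_card_commonNeighbors_eq_sum_degree_pow G v A c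
    calc δ ^ (#A + 1) ≤ G.degree v * δ ^ #A := by
          rw [pow_succ']; exact mul_le_mul_of_nonneg_right (hδ v) (by positivity)
      _ = ∑ _y ∈ G.neighborFinset v, δ ^ #A := by
          rw [sum_const, card_neighborFinset_eq_degree, nsmul_eq_mul]
      _ ≤ ∑ y ∈ G.neighborFinset v, (G.degree y : ℝ) ^ #A :=
          sum_le_sum fun y _ => pow_le_pow_left₀ hδ0 (hδ y) _
      _ = ∑ g ∈ Gs, F g := hdouble.symm
  have hGs : (#Gs : ℝ) = (Fintype.card V : ℝ) ^ #A := by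
    rw [card_piFinset_ite_singleton, card_univ]; push_cast; rfl
  have hExt : (#(bipartiteExtensions G v A B c) : ℝ) = ∑ g ∈ Gs, F g ^ (m + 1) := by
    rw [card_bipartiteExtensions hAB, hm]; push_cast; rfl
  calc δ ^ ((#A + 1) * #B) = (δ ^ (#A + 1)) ^ (m + 1) := by rw [hm, pow_mul]
    _ ≤ (∑ g ∈ Gs, F g) ^ (m + 1) := pow_le_pow_left₀ (by positivity) hsum _
    _ ≤ (#Gs : ℝ) ^ m * ∑ g ∈ Gs, F g ^ (m + 1) :=
        pow_sum_le_card_mul_sum_pow (fun _ _ => by positivity) m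
    _ = _ := by rw [hGs, hExt, hm, ← pow_mul, Nat.add_sub_cancel]

lemma pow_mul_pow_le_card_bipartiteExtensions (hAB : Disjoint A B) (hB : B.Nonempty) {γ : ℝ}
    (hγ : 0 ≤ γ) (hδ : ∀ z, γ * Fintype.card V ≤ G.degree z) :
    γ ^ ((#A + 1) * #B) * (Fintype.card V : ℝ) ^ (#A + #B) ≤
      #(bipartiteExtensions G v A B c) := by
  have hn : (0 : ℝ) < Fintype.card V := by exact_mod_cast Fintype.card_pos_iff.2 ⟨v⟩
  have hexp : (#A + 1) * #B = #A * (#B - 1) + (#A + #B) := by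
    obtain ⟨m, hm⟩ : ∃ m, #B = m + 1 := Nat.exists_eq_succ_of_ne_zero hB.card_pos.ne'
    rw [hm, Nat.add_sub_cancel]; ring
  refine le_of_mul_le_mul_left ?_ (pow_pos hn (#A * (#B - 1)))
  calc _ = (γ * Fintype.card V) ^ ((#A + 1) * #B) := by rw [mul_pow, hexp, pow_add]; ring
    _ ≤ _ := pow_le_card_bipartiteExtensions hAB hB (by positivity) hδ

variable (G) in
def edgeCopies (H : SimpleGraph ι) [DecidableRel H.Adj] (v w : V) : Finset (ι → V) :=
  (univ : Finset (ι → V)).filter fun f =>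
    Function.Injective f ∧ (∀ x y, H.Adj x y → G.Adj (f x) (f y)) ∧
      ∃ x y, H.Adj x y ∧ f x = v ∧ f y = w

section Pendant

variable {H : SimpleGraph ι} [DecidableRel H.Adj] {w : V} {side : ι → Bool} {u u' : ι}

variable (G v w side u u') in
def pendantExtensions : Finset (ι → V) :=
  bipartiteExtensions G v (({x | side x = true} : Finset ι).erase u')
    (({y | side y = false} : Finset ι).erase u)
    (fun z => if z = u then w else v)

lemma apply_eq_of_mem_pendantExtensions (hu : side u = false) (hu' : side u' = true)
    {f : ι → V} (hf : f ∈ pendantExtensions G v w side u u') : f u = w ∧ f u' = v := by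
  have huu' : u' ≠ u := by rintro rfl; simp_all
  simp only [pendantExtensions, bipartiteExtensions, mem_filter, mem_univ, true_and] at hf
  exact ⟨by simpa using hf.1 u (by simp [hu]) (by simp),
    by simpa [huu'] using hf.1 u' (by simp) (by simp [hu'])⟩

lemma map_adj_of_mem_pendantExtensions (hbip : ∀ x y, H.Adj x y → side x ≠ side y)
    (hu : side u = false) (hu' : side u' = true) (hNu : H.neighborFinset u = {u'})
    (hvw : G.Adj v w) {f : ι → V} (hf : f ∈ pendantExtensions G v w side u u') :
    ∀ x y, H.Adj x y → G.Adj (f x) (f y) := by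
  obtain ⟨hfu, hfu'⟩ := apply_eq_of_mem_pendantExtensions hu hu' hf
  simp only [pendantExtensions, bipartiteExtensions, mem_filter, mem_univ, true_and] at hf
  have key : ∀ x y, side x = true → side y = false → H.Adj x y → G.Adj (f x) (f y) := by
    intro x y hx hy hxy
    by_cases hyu : y = u
    · subst hyu
      obtain rfl : x = u' := by rw [← mem_singleton, ← hNu, mem_neighborFinset]; exact hxy.symm
      rw [hfu, hfu']; exact hvw
    have hyB := hf.2 y (by simp [hyu, hy])
    by_cases hxu' : x = u'
    · subst hxu'; rw [hfu']; exact hyB.1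
    · exact hyB.2 x (by simp [hxu', hx])
  intro x y hxy
  cases hx : side x
  · have hy : side y = true := by simpa [hx] using (hbip x y hxy).symm
    exact (key y x hy hx hxy.symm).symm
  · have hy : side y = false := by simpa [hx] using (hbip x y hxy).symm
    exact key x y hx hy hxy

lemma filter_injective_pendantExtensions_subset_edgeCopies
    (hbip : ∀ x y, H.Adj x y → side x ≠ side y) (hu : side u = false) (hu' : side u' = true)
    (hNu : H.neighborFinset u = {u'}) (hvw : G.Adj v w) :
    {f ∈ pendantExtensions G v w side u u' | Function.Injective f} ⊆ edgeCopies G H v w := by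
  intro f hf
  rw [mem_filter] at hf
  obtain ⟨hfu, hfu'⟩ := apply_eq_of_mem_pendantExtensions hu hu' hf.1
  have huu' : H.Adj u u' := by rw [← mem_neighborFinset, hNu]; exact mem_singleton_self u'
  simp only [edgeCopies, mem_filter, mem_univ, true_and]
  exact ⟨hf.2, map_adj_of_mem_pendantExtensions hbip hu hu' hNu hvw hf.1,
    u', u, huu'.symm, hfu', hfu⟩

lemma card_filter_not_injective_pendantExtensions_le (hu : side u = false)
    (hu' : side u' = true) (hvw : v ≠ w) :
    #{f ∈ pendantExtensions G v w side u u' | ¬ Function.Injective f} ≤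
      Fintype.card ι ^ 2 * Fintype.card V ^ (Fintype.card ι - 3) := by
  have huu' : u ≠ u' := by rintro rfl; simp_all
  have hinj : Set.InjOn (fun z => if z = u then w else v) ({u, u'} : Finset ι) := by
    simp [huu'.symm, hvw.symm]
  calc _ ≤ #{f : ι → V | (∀ z ∈ ({u, u'} : Finset ι), f z = if z = u then w else v) ∧
        ¬ Function.Injective f} := by
        refine card_le_card fun f hf => ?_
        simp only [mem_filter, mem_univ, true_and] at hf ⊢
        obtain ⟨hfu, hfu'⟩ := apply_eq_of_mem_pendantExtensions hu hu' hf.1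
        simp [hfu, hfu', huu'.symm, hf.2]
    _ ≤ _ := card_pinned_not_injective_le hinj
    _ = _ := by rw [card_pair huu', Nat.sub_sub]

lemma pow_mul_pow_le_card_pendantExtensions {a b : ℕ} (ha : 1 ≤ a) (hb : 2 ≤ b)
    (hA : #{x | side x = true} = a) (hB : #{x | side x = false} = b)
    (hu : side u = false) (hu' : side u' = true) {γ : ℝ} (hγ : 0 ≤ γ)
    (hδ : ∀ z, γ * Fintype.card V ≤ G.degree z) :
    γ ^ (a * (b - 1)) * (Fintype.card V : ℝ) ^ (a + b - 2) ≤
      #(pendantExtensions G v w side u u') := by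
  have hcA : #(({x | side x = true} : Finset ι).erase u') = a - 1 := by
    rw [card_erase_of_mem (by simp [hu']), hA]
  have hcB : #(({y | side y = false} : Finset ι).erase u) = b - 1 := by
    rw [card_erase_of_mem (by simp [hu]), hB]
  have hAB : Disjoint (({x | side x = true} : Finset ι).erase u')
      (({y | side y = false} : Finset ι).erase u) :=
    disjoint_left.2 fun x hxA hxB => by simp_all
  have := pow_mul_pow_le_card_bipartiteExtensions (v := v) (c := fun z => if z = u then w else v)
    hAB (card_pos.1 (by omega)) hγ hδ
  rwa [hcA, hcB, Nat.sub_add_cancel ha, show a - 1 + (b - 1) = a + b - 2 by omega] at this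

lemma sub_le_card_edgeCopies (hbip : ∀ x y, H.Adj x y → side x ≠ side y) {a b : ℕ}
    (ha : 1 ≤ a) (hb : 2 ≤ b) (hcard : Fintype.card ι = a + b)
    (hA : #{x | side x = true} = a) (hB : #{x | side x = false} = b)
    (hu : side u = false) (hNu : H.neighborFinset u = {u'}) {γ : ℝ} (hγ : 0 ≤ γ)
    (hδ : ∀ z, γ * Fintype.card V ≤ G.degree z) (hvw : G.Adj v w) :
    γ ^ (a * (b - 1)) * (Fintype.card V : ℝ) ^ (a + b - 2)
        - ((a : ℝ) + b) ^ 2 * (Fintype.card V : ℝ) ^ (a + b - 3)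
      ≤ #(edgeCopies G H v w) := by
  have hu' : side u' = true := by
    have huu' : H.Adj u u' := by rw [← mem_neighborFinset, hNu]; exact mem_singleton_self u'
    simpa [hu] using (hbip u u' huu').symm
  set Ext := pendantExtensions G v w side u u'
  have hlow := pow_mul_pow_le_card_pendantExtensions (v := v) (w := w) ha hb hA hB hu hu' hγ hδ
  have hbad : (#{f ∈ Ext | ¬ Function.Injective f} : ℝ) ≤
      ((a : ℝ) + b) ^ 2 * (Fintype.card V : ℝ) ^ (a + b - 3) := by
    have := card_filter_not_injective_pendantExtensions_le (G := G) hu hu' hvw.ne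
    rw [hcard] at this
    exact_mod_cast this
  have hgood : (#{f ∈ Ext | Function.Injective f} : ℝ) ≤ #(edgeCopies G H v w) := by
    exact_mod_cast card_le_card
      (filter_injective_pendantExtensions_subset_edgeCopies hbip hu hu' hNu hvw)
  have hsplit : (#Ext : ℝ) = #{f ∈ Ext | Function.Injective f} +
      #{f ∈ Ext | ¬ Function.Injective f} := by
    exact_mod_cast (card_filter_add_card_filter_not (s := Ext) Function.Injective).symm
  linarith

end Pendant

lemma half_mul_pow_le_mul_pow_sub {K C x : ℝ} (m : ℕ) (hK : 0 < K) (hx0 : 0 ≤ x)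
    (hx : 2 * C / K ≤ x) : K / 2 * x ^ (m + 1) ≤ K * x ^ (m + 1) - C * x ^ m := by
  have hC : C ≤ K / 2 * x := by
    rw [div_le_iff₀ hK] at hx; linarith
  have := mul_le_mul_of_nonneg_right hC (pow_nonneg hx0 m)
  rw [pow_succ]; linarith

end

theorem pendant_bipartite_popular_edges_general {VH : Type*} [Fintype VH] [DecidableEq VH]
    (H : SimpleGraph VH) [DecidableRel H.Adj]
    (a b : ℕ) (ha : 1 ≤ a) (hb : 2 ≤ b) (hcard : Fintype.card VH = a + b)
    (side : VH → Bool) (hbip : ∀ x y, H.Adj x y → side x ≠ side y)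
    (hA : (univ.filter fun x => side x = true).card = a)
    (hB : (univ.filter fun x => side x = false).card = b)
    (u : VH) (hu : side u = false) (hdu : H.degree u = 1) :
    ∀ γ : ℝ, 0 < γ → ∃ c : ℝ, 0 < c ∧ ∃ n₀ : ℕ, ∀ n : ℕ, n₀ ≤ n →
      ∀ (V : Type) [Fintype V] [DecidableEq V] (G : SimpleGraph V) [DecidableRel G.Adj],
        Fintype.card V = n → γ * n ≤ G.minDegree →
        ∀ v w : V, G.Adj v w →
          c * (n : ℝ) ^ (a + b - 2) ≤
            (((univ : Finset (VH → V)).filter fun f =>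
              Function.Injective f ∧ (∀ x y, H.Adj x y → G.Adj (f x) (f y)) ∧
                ∃ x y, H.Adj x y ∧ f x = v ∧ f y = w).card : ℝ) := by
  intro γ hγ
  obtain ⟨u', hNu⟩ := card_eq_one.1 ((card_neighborFinset_eq_degree H u).trans hdu)
  set K := γ ^ (a * (b - 1))
  refine ⟨K / 2, by positivity, ⌈2 * ((a : ℝ) + b) ^ 2 / K⌉₊,
    fun n hn V _ _ G _ hV hmin v w hvw => ?_⟩
  subst hV
  have hδ : ∀ z, γ * Fintype.card V ≤ G.degree z :=
    fun z => hmin.trans (by exact_mod_cast G.minDegree_le_degree z)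
  have hexp : a + b - 2 = a + b - 3 + 1 := by omega
  calc K / 2 * (Fintype.card V : ℝ) ^ (a + b - 2)
      ≤ K * (Fintype.card V : ℝ) ^ (a + b - 2)
        - ((a : ℝ) + b) ^ 2 * (Fintype.card V : ℝ) ^ (a + b - 3) := by
        rw [hexp]
        exact half_mul_pow_le_mul_pow_sub _ (by positivity) (by positivity)
          ((Nat.le_ceil _).trans (by exact_mod_cast hn))
    _ ≤ _ := sub_le_card_edgeCopies hbip ha hb hcard hA hB hu hNu hγ.le hδ hvw

theorem pendant_bipartite_popular_edges {VH : Type*} [Fintype VH] [DecidableEq VH]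
    (H : SimpleGraph VH) [DecidableRel H.Adj]
    (a b : ℕ) (ha : 1 ≤ a) (hb : 2 ≤ b) (hcard : Fintype.card VH = a + b)
    (side : VH → Bool) (hbip : ∀ x y, H.Adj x y → side x ≠ side y)
    (hA : (univ.filter fun x => side x = true).card = a)
    (hB : (univ.filter fun x => side x = false).card = b)
    (hiso : ∀ x : VH, 0 < H.degree x)
    (u : VH) (hu : side u = false) (hdu : H.degree u = 1)
    (hemb : ∃ e : VH → Fin a ⊕ Fin b, Function.Injective e ∧
      ∀ x y, H.Adj x y → (pendantGraph a b).Adj (e x) (e y)) :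
    ∀ γ : ℝ, 0 < γ → ∃ c : ℝ, 0 < c ∧ ∃ n₀ : ℕ, ∀ n : ℕ, n₀ ≤ n →
      ∀ (V : Type) [Fintype V] [DecidableEq V] (G : SimpleGraph V) [DecidableRel G.Adj],
        Fintype.card V = n → γ * n ≤ G.minDegree →
        ∀ v w : V, G.Adj v w →
          c * (n : ℝ) ^ (a + b - 2) ≤
            (((univ : Finset (VH → V)).filter fun f =>
              Function.Injective f ∧ (∀ x y, H.Adj x y → G.Adj (f x) (f y)) ∧
                ∃ x y, H.Adj x y ∧ f x = v ∧ f y = w).card : ℝ) :=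
  pendant_bipartite_popular_edges_general H a b ha hb hcard side hbip hA hB u hu hdu
end

section
/- Let r ≥ 3, s ≥ 2, and let G be the Turán graph T(n, r−1) with parts S₁,...,S_{r−1} of equal size n/(r−1), modified by placing an arbitrary graph inside S₁ in which every vertex has degree at most 2p·n/(r−1) for some p ∈ (0, 1/(4s²)). Then G has minimum degree at least ((r−2)/(r−1))·n, and every copy of the complete multipartite graph K_r[s] in G contains a copy of K_{s,s} inside S₁. -/
open Finset SimpleGraph
open scoped Classical

/-!
Every vertex is joined to all vertices outside its own part, which gives the degree bound.
For the second claim, call a class of the copy of `K_r[s]` bad if one of its vertices leaves `S₁`.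
Two bad classes cannot use the same part `Sᵢ ≠ S₁`: the two witnesses would be adjacent inside an
independent part. Hence at most `r - 2` of the `r` classes are bad, and two classes lie entirely
in `S₁`; being distinct classes of `K_r[s]`, they span a `K_{s,s}`.
-/

namespace SimpleGraph

variable {ι β : Type*} [Fintype ι] {G : SimpleGraph (ι × β)}

lemma card_mul_le_degree_of_adj_of_fst_ne [Fintype β] [DecidableRel G.Adj]
    (hcross : ∀ u v : ι × β, u.1 ≠ v.1 → G.Adj u v) (v : ι × β) :
    (Fintype.card ι - 1) * Fintype.card β ≤ G.degree v := by
  have hsub : (univ.erase v.1) ×ˢ (univ : Finset β) ⊆ G.neighborFinset v := by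
    rintro w hw
    rw [mem_neighborFinset]
    exact hcross v w (mem_erase.mp (mem_product.mp hw).1).1.symm
  simpa [card_erase_of_mem] using card_le_card hsub

lemma card_mul_le_minDegree_of_adj_of_fst_ne [Fintype β] [DecidableRel G.Adj]
    (hcross : ∀ u v : ι × β, u.1 ≠ v.1 → G.Adj u v) :
    (Fintype.card ι - 1) * Fintype.card β ≤ G.minDegree := by
  cases isEmpty_or_nonempty (ι × β) with
  | inl hempty =>
    rcases isEmpty_prod.mp hempty with h | h <;> simp
  | inr _ =>
    exact G.le_minDegree_of_forall_le_degree _ (card_mul_le_degree_of_adj_of_fst_ne hcross)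

variable {ι' κ : Type*} [Fintype ι'] {f : ι' × κ → ι × β} {i₀ : ι}

lemma card_classes_not_in_part_le
    (hadj : ∀ x y : ι' × κ, x.1 ≠ y.1 → G.Adj (f x) (f y))
    (hin : ∀ u v : ι × β, G.Adj u v → u.1 = v.1 → u.1 = i₀) :
    #{i | ∃ j, (f (i, j)).1 ≠ i₀} ≤ Fintype.card ι - 1 := by
  have hle := card_le_card_of_forall_subsingleton (fun i P => ∃ j, (f (i, j)).1 = P)
    (s := {i | ∃ j, (f (i, j)).1 ≠ i₀}) (t := univ.erase i₀)
    (fun i hi => by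
      obtain ⟨j, hj⟩ := (mem_filter.mp hi).2
      exact ⟨_, mem_erase.mpr ⟨hj, mem_univ _⟩, j, rfl⟩)
    (fun P hP => by
      rintro i₁ ⟨-, j₁, rfl⟩ i₂ ⟨-, j₂, hsame⟩
      by_contra hne
      exact (mem_erase.mp hP).1 (hin _ _ (hadj (i₁, j₁) (i₂, j₂) hne) hsame.symm))
  simpa [card_erase_of_mem] using hle

lemma exists_ne_classes_in_part
    (hadj : ∀ x y : ι' × κ, x.1 ≠ y.1 → G.Adj (f x) (f y))
    (hin : ∀ u v : ι × β, G.Adj u v → u.1 = v.1 → u.1 = i₀)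
    (hcard : Fintype.card ι < Fintype.card ι') :
    ∃ i₁ i₂, i₁ ≠ i₂ ∧ (∀ j, (f (i₁, j)).1 = i₀) ∧ ∀ j, (f (i₂, j)).1 = i₀ := by
  have hbad := card_classes_not_in_part_le hadj hin
  have hsplit := card_filter_add_card_filter_not (s := (univ : Finset ι'))
    (fun i => ∃ j, (f (i, j)).1 ≠ i₀)
  have hι : 0 < Fintype.card ι := Fintype.card_pos_iff.mpr ⟨i₀⟩
  have hgood : 1 < #{i | ¬∃ j, (f (i, j)).1 ≠ i₀} := by
    rw [card_univ] at hsplit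
    omega
  obtain ⟨i₁, h₁, i₂, h₂, hne⟩ := one_lt_card.mp hgood
  simp only [mem_filter, mem_univ, true_and, not_exists, not_not] at h₁ h₂
  exact ⟨i₁, i₂, hne, h₁, h₂⟩

lemma exists_biclique_in_part [Fintype κ] (hf : f.Injective)
    (hadj : ∀ x y : ι' × κ, x.1 ≠ y.1 → G.Adj (f x) (f y))
    (hin : ∀ u v : ι × β, G.Adj u v → u.1 = v.1 → u.1 = i₀)
    (hcard : Fintype.card ι < Fintype.card ι') :
    ∃ X Y : Finset (ι × β),
      #X = Fintype.card κ ∧ #Y = Fintype.card κ ∧ Disjoint X Y ∧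
      (∀ x ∈ X, x.1 = i₀ ∧ x ∈ Set.range f) ∧
      (∀ y ∈ Y, y.1 = i₀ ∧ y ∈ Set.range f) ∧
      ∀ x ∈ X, ∀ y ∈ Y, G.Adj x y := by
  obtain ⟨i₁, i₂, hne, h₁, h₂⟩ := exists_ne_classes_in_part hadj hin hcard
  have hclass : ∀ i, (fun j => f (i, j)).Injective := fun i _ _ h =>
    (Prod.ext_iff.mp (hf h)).2
  refine ⟨univ.image fun j => f (i₁, j), univ.image fun j => f (i₂, j),
    by rw [card_image_of_injective _ (hclass i₁), card_univ],
    by rw [card_image_of_injective _ (hclass i₂), card_univ], ?_, ?_, ?_, ?_⟩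
  · simp only [Finset.disjoint_left, mem_image, mem_univ, true_and, not_exists]
    rintro _ ⟨j, rfl⟩ j' hj'
    exact hne (Prod.ext_iff.mp (hf hj')).1.symm
  · simp only [mem_image, mem_univ, true_and]
    rintro _ ⟨j, rfl⟩
    exact ⟨h₁ j, _, rfl⟩
  · simp only [mem_image, mem_univ, true_and]
    rintro _ ⟨j, rfl⟩
    exact ⟨h₂ j, _, rfl⟩
  · simp only [mem_image, mem_univ, true_and]
    rintro _ ⟨j, rfl⟩ _ ⟨j', rfl⟩
    exact hadj _ _ hne

end SimpleGraph

theorem turan_modified_Kss_general {r s m : ℕ} (hr : 3 ≤ r)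
    (G : SimpleGraph (Fin (r - 1) × Fin m)) [DecidableRel G.Adj]
    (hcross : ∀ u v : Fin (r - 1) × Fin m, u.1 ≠ v.1 → G.Adj u v)
    (hin : ∀ u v : Fin (r - 1) × Fin m, G.Adj u v → u.1 = v.1 →
      ((u.1 : ℕ) = 0 ∧ (v.1 : ℕ) = 0)) :
    (((r : ℝ) - 2) / ((r : ℝ) - 1) * ((r - 1 : ℕ) * m : ℕ) ≤ G.minDegree) ∧
    ∀ f : Fin r × Fin s → Fin (r - 1) × Fin m, Function.Injective f →
      (∀ x y : Fin r × Fin s, x.1 ≠ y.1 → G.Adj (f x) (f y)) →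
      ∃ X Y : Finset (Fin (r - 1) × Fin m),
        X.card = s ∧ Y.card = s ∧ Disjoint X Y ∧
        (∀ x ∈ X, (x.1 : ℕ) = 0 ∧ x ∈ univ.image f) ∧
        (∀ y ∈ Y, (y.1 : ℕ) = 0 ∧ y ∈ univ.image f) ∧
        ∀ x ∈ X, ∀ y ∈ Y, G.Adj x y := by
  constructor
  · have hmin := card_mul_le_minDegree_of_adj_of_fst_ne hcross
    rw [Fintype.card_fin, Fintype.card_fin, Nat.sub_sub] at hmin
    have hr1 : (r : ℝ) - 1 ≠ 0 := by
      linarith [show (3 : ℝ) ≤ r by exact_mod_cast hr]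
    calc ((r : ℝ) - 2) / (r - 1) * ((r - 1 : ℕ) * m : ℕ)
        = ((r - (1 + 1)) * m : ℕ) := by
          push_cast [Nat.cast_sub (show 1 ≤ r by omega), Nat.cast_sub (show 1 + 1 ≤ r by omega)]
          field_simp
      _ ≤ G.minDegree := by exact_mod_cast hmin
  · intro f hf hadj
    obtain ⟨X, Y, hX, hY, hXY, hXpart, hYpart, hXY_adj⟩ :=
      exists_biclique_in_part (i₀ := ⟨0, by omega⟩) hf hadj
        (fun u v huv hsame => Fin.ext (hin u v huv hsame).1)
        (by simp only [Fintype.card_fin]; omega)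
    refine ⟨X, Y, by simpa using hX, by simpa using hY, hXY, fun x hx => ?_,
      fun y hy => ?_, hXY_adj⟩
    · exact ⟨congrArg Fin.val (hXpart x hx).1, by simpa using (hXpart x hx).2⟩
    · exact ⟨congrArg Fin.val (hYpart y hy).1, by simpa using (hYpart y hy).2⟩

theorem turan_modified_Kss {r s m : ℕ} (hr : 3 ≤ r) (hs : 2 ≤ s)
    (p : ℝ) (hp : 0 < p) (hp2 : p < 1 / (4 * (s : ℝ) ^ 2))
    (G : SimpleGraph (Fin (r - 1) × Fin m)) [DecidableRel G.Adj]
    (hcross : ∀ u v : Fin (r - 1) × Fin m, u.1 ≠ v.1 → G.Adj u v)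
    (hin : ∀ u v : Fin (r - 1) × Fin m, G.Adj u v → u.1 = v.1 →
      ((u.1 : ℕ) = 0 ∧ (v.1 : ℕ) = 0))
    (hdeg : ∀ v : Fin (r - 1) × Fin m, (v.1 : ℕ) = 0 →
      (((univ.filter fun w : Fin (r - 1) × Fin m =>
          (w.1 : ℕ) = 0 ∧ G.Adj v w).card : ℝ) ≤ 2 * p * m)) :
    (((r : ℝ) - 2) / ((r : ℝ) - 1) * ((r - 1 : ℕ) * m : ℕ) ≤ G.minDegree) ∧
    ∀ f : Fin r × Fin s → Fin (r - 1) × Fin m, Function.Injective f →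
      (∀ x y : Fin r × Fin s, x.1 ≠ y.1 → G.Adj (f x) (f y)) →
      ∃ X Y : Finset (Fin (r - 1) × Fin m),
        X.card = s ∧ Y.card = s ∧ Disjoint X Y ∧
        (∀ x ∈ X, (x.1 : ℕ) = 0 ∧ x ∈ univ.image f) ∧
        (∀ y ∈ Y, (y.1 : ℕ) = 0 ∧ y ∈ univ.image f) ∧
        ∀ x ∈ X, ∀ y ∈ Y, G.Adj x y :=
  turan_modified_Kss_general hr G hcross hin
end
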